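/- arXiv:1503.03803 — 11 statements merged into one kernel-verified Lean document; each statement's English description precedes it below -/
import Mathlib

section
/- Let S : {1,2,3}³ → ℝ satisfy S_{ijk} = S_{jik} for all i,j,k, and for every k both Σ_{i=1}^{3} S_{iik} = 0 and Σ_{i=1}^{3} S_{kii} = 0. Then for every λ : {1,2,3} → ℝ one has Σ_{k=1}^{3} ( Σ_{i=1}^{3} λ_i S_{iik} )² ≤ (3/5) · ( Σ_{i=1}^{3} λ_i² ) · ( Σ_{i,j,k=1}^{3} S_{ijk}² + (1/2) Σ_{i,j,k=1}^{3} (S_{ijk} − S_{ikj})² ). -/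
set_option maxHeartbeats 1000000

private lemma cs3 (a b c x y z : ℝ) :
    (a * x + b * y + c * z) ^ 2 ≤ (a ^ 2 + b ^ 2 + c ^ 2) * (x ^ 2 + y ^ 2 + z ^ 2) := by
  nlinarith [sq_nonneg (a * y - b * x), sq_nonneg (a * z - c * x), sq_nonneg (b * z - c * y)]

private lemma key
    (x000 x001 x002 x010 x011 x012 x020 x021 x022
     x110 x111 x112 x120 x121 x122 x220 x221 x222 : ℝ)
    (h1 : x000 + x110 + x220 = 0)
    (h2 : x001 + x111 + x221 = 0)
    (h3 : x002 + x112 + x222 = 0)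
    (h4 : x000 + x011 + x022 = 0)
    (h5 : x010 + x111 + x122 = 0)
    (h6 : x020 + x121 + x222 = 0) :
    5 * (x000 ^ 2 + x001 ^ 2 + x002 ^ 2 + x110 ^ 2 + x111 ^ 2 + x112 ^ 2 +
          x220 ^ 2 + x221 ^ 2 + x222 ^ 2) ≤
      3 * ((x000 ^ 2 + x001 ^ 2 + x002 ^ 2 + x110 ^ 2 + x111 ^ 2 + x112 ^ 2 +
            x220 ^ 2 + x221 ^ 2 + x222 ^ 2) +
        2 * (x010 ^ 2 + x011 ^ 2 + x012 ^ 2 + x020 ^ 2 + x021 ^ 2 + x022 ^ 2 +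
            x120 ^ 2 + x121 ^ 2 + x122 ^ 2)) +
      3 * ((x001 - x010) ^ 2 + (x002 - x020) ^ 2 + (x012 - x021) ^ 2 +
           (x011 - x110) ^ 2 + (x012 - x120) ^ 2 + (x112 - x121) ^ 2 +
           (x021 - x120) ^ 2 + (x022 - x220) ^ 2 + (x122 - x221) ^ 2) := by
  have e1 : x000 = -x110 - x220 := by linarith
  subst e1
  have e2 : x001 = -x111 - x221 := by linarith
  subst e2
  have e3 : x002 = -x112 - x222 := by linarith
  subst e3
  have e4 : x010 = -x111 - x122 := by linarith
  subst e4
  have e5 : x011 = -x022 + x110 + x220 := by linarith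
  subst e5
  have e6 : x020 = -x121 - x222 := by linarith
  subst e6
  nlinarith [sq_nonneg (3 * x022 - x110 - 2 * x220),
    sq_nonneg (-x112 + 3 * x121 + x222),
    sq_nonneg (x111 + 3 * x122 - x221),
    sq_nonneg (-x012 - x021 + 4 * x120),
    sq_nonneg (3 * x021 - x012),
    sq_nonneg x012]

/-- pointwise algebraic core of the refined Kato-type inequality
(Appendix A). -/
theorem kato_type_inequality (S : Fin 3 → Fin 3 → Fin 3 → ℝ)
    (hsymm : ∀ i j k, S i j k = S j i k)
    (htrace1 : ∀ k, ∑ i, S i i k = 0)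
    (htrace2 : ∀ k, ∑ i, S k i i = 0) :
    ∀ lam : Fin 3 → ℝ,
      ∑ k, (∑ i, lam i * S i i k) ^ 2 ≤
        (3 / 5) * (∑ i, lam i ^ 2) *
          ((∑ i, ∑ j, ∑ k, S i j k ^ 2) +
            (1 / 2) * ∑ i, ∑ j, ∑ k, (S i j k - S i k j) ^ 2) := by
  intro lam
  have h10 := htrace1 0; have h11 := htrace1 1; have h12 := htrace1 2
  have h20 := htrace2 0; have h21 := htrace2 1; have h22 := htrace2 2
  simp only [Fin.sum_univ_three] at h10 h11 h12 h20 h21 h22 ⊢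
  simp only [hsymm 1 0, hsymm 2 0, hsymm 2 1] at h20 h21 h22 ⊢
  have hD := key (S 0 0 0) (S 0 0 1) (S 0 0 2) (S 0 1 0) (S 0 1 1) (S 0 1 2)
      (S 0 2 0) (S 0 2 1) (S 0 2 2) (S 1 1 0) (S 1 1 1) (S 1 1 2)
      (S 1 2 0) (S 1 2 1) (S 1 2 2) (S 2 2 0) (S 2 2 1) (S 2 2 2)
      (by linarith) (by linarith) (by linarith) (by linarith) (by linarith) (by linarith)
  have hL : (0:ℝ) ≤ lam 0 ^ 2 + lam 1 ^ 2 + lam 2 ^ 2 := by positivity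
  have hmul := mul_le_mul_of_nonneg_left hD hL
  have cs0 := cs3 (lam 0) (lam 1) (lam 2) (S 0 0 0) (S 1 1 0) (S 2 2 0)
  have cs1 := cs3 (lam 0) (lam 1) (lam 2) (S 0 0 1) (S 1 1 1) (S 2 2 1)
  have cs2 := cs3 (lam 0) (lam 1) (lam 2) (S 0 0 2) (S 1 1 2) (S 2 2 2)
  linarith [hmul, cs0, cs1, cs2]
end

section
/- Let A be a real 3×3 symmetric matrix with trace zero. Then 54·(det A)² ≤ ( Σ_{i,j} A_{ij}² )³, i.e. 54 (det A)² ≤ ‖A‖⁶ where ‖A‖ is the Frobenius norm. Moreover, equality holds if and only if A has at most two distinct eigenvalues (equivalently, the characteristic polynomial of A has a repeated root). -/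
open Polynomial
open Matrix

lemma charpoly_unitary_conj {n : Type*} [Fintype n] [DecidableEq n]
    (U D : Matrix n n ℝ) (hU : U * star U = 1) :
    (U * D * star U).charpoly = D.charpoly := by
  have hcm : (U * D * star U).charmatrix =
      (C : ℝ →+* ℝ[X]).mapMatrix U * D.charmatrix * (C : ℝ →+* ℝ[X]).mapMatrix (star U) := by
    simp only [charmatrix, mul_sub, sub_mul, _root_.map_mul]
    congr 1
    rw [← (Matrix.scalar_commute X (fun r => Commute.all _ _)
        ((C : ℝ →+* ℝ[X]).mapMatrix U)).eq, mul_assoc, ← RingHom.map_mul, hU, RingHom.map_one,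
      mul_one]
  show ((U * D * star U).charmatrix).det = (D.charmatrix).det
  rw [hcm, det_mul, det_mul, mul_right_comm, ← Matrix.det_mul ((C : ℝ →+* ℝ[X]).mapMatrix U)
    ((C : ℝ →+* ℝ[X]).mapMatrix (star U)), ← RingHom.map_mul, hU, RingHom.map_one,
    det_one, one_mul]

/-- for a real symmetric traceless 3×3 matrix,
`54 (det A)² ≤ ‖A‖⁶` (Frobenius norm), with equality iff the characteristic
polynomial of `A` has a repeated root (equivalently, `A` has at most two
distinct eigenvalues). -/
theorem det_sq_le_frobenius_cube (A : Matrix (Fin 3) (Fin 3) ℝ)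
    (hsymm : A.IsSymm) (htrace : A.trace = 0) :
    54 * A.det ^ 2 ≤ (∑ i, ∑ j, A i j ^ 2) ^ 3 ∧
      (54 * A.det ^ 2 = (∑ i, ∑ j, A i j ^ 2) ^ 3 ↔
        ∃ x : ℝ, (X - C x) ^ 2 ∣ A.charpoly) := by
  have hA : A.IsHermitian := by
    rwa [Matrix.IsHermitian, Matrix.conjTranspose, show (star : ℝ → ℝ) = id from rfl,
      Matrix.map_id]
  set U : Matrix (Fin 3) (Fin 3) ℝ := (hA.eigenvectorUnitary : Matrix (Fin 3) (Fin 3) ℝ) with hUdef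
  have hU : U * star U = 1 := (Matrix.mem_unitaryGroup_iff).mp hA.eigenvectorUnitary.2
  have hU' : star U * U = 1 := (Matrix.mem_unitaryGroup_iff').mp hA.eigenvectorUnitary.2
  set D : Matrix (Fin 3) (Fin 3) ℝ := Matrix.diagonal hA.eigenvalues with hDdef
  have hspec : A = U * D * star U := by
    have := hA.spectral_theorem
    rwa [RCLike.ofReal_real_eq_id, Function.id_comp] at this
  set a := hA.eigenvalues 0 with ha
  set b := hA.eigenvalues 1 with hb
  set c := hA.eigenvalues 2 with hc
  have hcancel : ∀ M : Matrix (Fin 3) (Fin 3) ℝ, star U * (U * M) = M := by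
    intro M; rw [← mul_assoc, hU', one_mul]
  have hcp : A.charpoly = (X - C a) * ((X - C b) * (X - C c)) := by
    rw [hspec, charpoly_unitary_conj U D hU,
      Matrix.charpoly_of_upperTriangular D (Matrix.blockTriangular_diagonal _),
      Fin.prod_univ_three]
    rw [hDdef]
    simp [Matrix.diagonal_apply_eq, mul_assoc, ← ha, ← hb, ← hc]
  have htr : a + b + c = 0 := by
    have h1 : A.trace = D.trace := by
      rw [hspec, Matrix.trace_mul_cycle, hU', one_mul]
    rw [h1, hDdef, Matrix.trace_diagonal, Fin.sum_univ_three] at htrace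
    exact htrace
  have hdet : A.det = a * (b * c) := by
    rw [hspec, Matrix.det_mul, Matrix.det_mul, mul_right_comm, ← Matrix.det_mul U (star U), hU,
      Matrix.det_one, one_mul, hDdef, Matrix.det_diagonal, Fin.prod_univ_three, mul_assoc]
  have hS : ∑ i, ∑ j, A i j ^ 2 = a ^ 2 + b ^ 2 + c ^ 2 := by
    have h1 : ∑ i, ∑ j, A i j ^ 2 = (A * A).trace := by
      rw [Matrix.trace]
      simp only [Matrix.diag, Matrix.mul_apply]
      refine Finset.sum_congr rfl fun i _ => Finset.sum_congr rfl fun j _ => ?_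
      rw [hsymm.apply i j, sq]
    have hAA : A * A = U * (D * D) * star U := by
      rw [hspec]
      simp only [mul_assoc, hcancel]
    rw [h1, hAA, Matrix.trace_mul_cycle, hU', one_mul, hDdef, Matrix.diagonal_mul_diagonal,
      Matrix.trace_diagonal, Fin.sum_univ_three]
    simp [sq, ← ha, ← hb, ← hc]
  have key : (a ^ 2 + b ^ 2 + c ^ 2) ^ 3 - 54 * (a * (b * c)) ^ 2
      = 2 * ((a - b) * ((b - c) * (c - a))) ^ 2 := by
    have hcc : c = -a - b := by linarith
    rw [hcc]; ring
  rw [hdet, hS]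
  constructor
  · nlinarith [sq_nonneg ((a - b) * ((b - c) * (c - a)))]
  constructor
  · intro heq
    have hz : (a - b) * ((b - c) * (c - a)) = 0 := by
      nlinarith [sq_nonneg ((a - b) * ((b - c) * (c - a)))]
    rcases mul_eq_zero.mp hz with h | h
    · exact ⟨a, X - C c, by rw [hcp, show b = a by linarith]; ring⟩
    · rcases mul_eq_zero.mp h with h' | h'
      · exact ⟨b, X - C a, by rw [hcp, show c = b by linarith]; ring⟩
      · exact ⟨a, X - C b, by rw [hcp, show c = a by linarith]; ring⟩
  · rintro ⟨x, hdvd⟩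
    have hne : A.charpoly ≠ 0 := A.charpoly_monic.ne_zero
    have h2 : 2 ≤ Multiset.count x A.charpoly.roots := by
      rw [Polynomial.count_roots]
      exact (Polynomial.le_rootMultiplicity_iff hne).mpr hdvd
    have h1 : (X - C b) * (X - C c) ≠ 0 :=
      mul_ne_zero (Polynomial.X_sub_C_ne_zero b) (Polynomial.X_sub_C_ne_zero c)
    have hroots : A.charpoly.roots = {a, b, c} := by
      rw [hcp, Polynomial.roots_mul (mul_ne_zero (Polynomial.X_sub_C_ne_zero a) h1),
        Polynomial.roots_mul h1, Polynomial.roots_X_sub_C, Polynomial.roots_X_sub_C,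
        Polynomial.roots_X_sub_C]
      rfl
    rw [hroots] at h2
    have hz : a = b ∨ b = c ∨ c = a := by
      simp only [Multiset.insert_eq_cons, Multiset.count_cons, Multiset.count_singleton] at h2
      by_cases hxa : x = a
      · subst hxa
        by_cases hxb : a = b
        · exact Or.inl hxb
        · by_cases hxc : a = c
          · exact Or.inr (Or.inr hxc.symm)
          · simp [hxb, hxc] at h2
      · by_cases hxb : x = b
        · subst hxb
          by_cases hxc : b = c
          · exact Or.inr (Or.inl hxc)
          · simp [hxa, hxc] at h2
        · by_cases hxc : x = c
          · subst hxc
            simp [hxa, hxb] at h2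
          · simp [hxa, hxb, hxc] at h2
    have hz0 : (a - b) * ((b - c) * (c - a)) = 0 := by
      rcases hz with h | h | h <;> rw [h] <;> ring
    rw [hz0] at key
    nlinarith [key]
end

section
/- Let A be a real 3×3 symmetric matrix with trace zero. Then 18·det A ≥ −√6 · ( Σ_{i,j} A_{ij}² )^{3/2}; equivalently, for every real number R, R·‖A‖² + 18 det A ≥ (R − √6 ‖A‖)·‖A‖², where ‖A‖ is the Frobenius norm. -/
/-!
Diagonalise `A`: its eigenvalues `x, y, z` satisfy `x + y + z = tr A = 0`, `‖A‖² = x² + y² + z²`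
and `det A = x y z`. For such a triple the discriminant of the cubic with roots `x, y, z` is
`(‖A‖⁶ - 54 (x y z)²) / 2`, so `54 (det A)² ≤ ‖A‖⁶`, i.e. `18 |det A| ≤ √6 ‖A‖³`.
-/

namespace Matrix

theorem trace_mul_transpose_self {m n : Type*} [Fintype m] [Fintype n] (A : Matrix m n ℝ) :
    (A * Aᵀ).trace = ∑ i, ∑ j, A i j ^ 2 := by
  simp only [trace, diag_apply, mul_apply, transpose_apply, sq]

theorem IsHermitian.trace_mul_self_eq_sum_sq_eigenvalues {n 𝕜 : Type*} [Fintype n] [DecidableEq n]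
    [RCLike 𝕜] {A : Matrix n n 𝕜} (hA : A.IsHermitian) :
    (A * A).trace = ∑ i, (hA.eigenvalues i : 𝕜) ^ 2 := by
  conv_lhs => rw [hA.spectral_theorem, ← map_mul, Unitary.conjStarAlgAut_apply, trace_mul_cycle,
    Unitary.coe_star_mul_self, one_mul, diagonal_mul_diagonal, trace_diagonal]
  simp [sq]

end Matrix

theorem sq_add_sq_add_sq_cube_sub_eq_of_add_add_eq_zero {R : Type*} [CommRing R] {x y z : R}
    (h : x + y + z = 0) :
    (x ^ 2 + y ^ 2 + z ^ 2) ^ 3 - 54 * (x * y * z) ^ 2 = 2 * ((x - y) * (y - z) * (z - x)) ^ 2 := by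
  obtain rfl : z = -(x + y) := by linear_combination h
  ring

theorem mul_mul_sq_le_of_add_add_eq_zero {R : Type*} [CommRing R] [LinearOrder R]
    [IsStrictOrderedRing R] {x y z : R} (h : x + y + z = 0) :
    54 * (x * y * z) ^ 2 ≤ (x ^ 2 + y ^ 2 + z ^ 2) ^ 3 := by
  have := sq_add_sq_add_sq_cube_sub_eq_of_add_add_eq_zero h
  linarith [sq_nonneg ((x - y) * (y - z) * (z - x))]

theorem Matrix.IsSymm.fifty_four_mul_det_sq_le {A : Matrix (Fin 3) (Fin 3) ℝ} (hA : A.IsSymm)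
    (htrace : A.trace = 0) : 54 * A.det ^ 2 ≤ (∑ i, ∑ j, A i j ^ 2) ^ 3 := by
  have hH : A.IsHermitian := isHermitian_iff_isSymm.mpr hA
  have hsum : ∑ i, hH.eigenvalues i = 0 := by
    simpa [hH.trace_eq_sum_eigenvalues] using htrace
  have hdet : A.det = ∏ i, hH.eigenvalues i := by simpa using hH.det_eq_prod_eigenvalues
  have hnorm : ∑ i, ∑ j, A i j ^ 2 = ∑ i, hH.eigenvalues i ^ 2 := by
    simpa [← trace_mul_transpose_self, hA.eq] using hH.trace_mul_self_eq_sum_sq_eigenvalues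
  rw [hdet, hnorm]
  simp only [Fin.sum_univ_three, Fin.prod_univ_three] at hsum ⊢
  exact mul_mul_sq_le_of_add_add_eq_zero hsum

theorem neg_sqrt_six_mul_le_of_sq_le {a S : ℝ} (hS : 0 ≤ S) (h : 54 * a ^ 2 ≤ S ^ 3) :
    -(√6 * √S * S) ≤ 18 * a := by
  refine (abs_le_of_sq_le_sq' ?_ (by positivity)).1
  rw [mul_pow, mul_pow, mul_pow, Real.sq_sqrt (by norm_num), Real.sq_sqrt hS]
  nlinarith

theorem Real.rpow_three_halves {x : ℝ} (hx : 0 ≤ x) : x ^ (3 / 2 : ℝ) = √x * x := by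
  rw [show (3 / 2 : ℝ) = 1 / 2 + 1 by norm_num, Real.rpow_add' hx (by norm_num), Real.rpow_one,
    Real.sqrt_eq_rpow]

/-- for a real symmetric traceless 3×3 matrix,
`18 det A ≥ -√6 ‖A‖³` (Frobenius norm); equivalently, for every real `R`,
`R ‖A‖² + 18 det A ≥ (R - √6 ‖A‖) ‖A‖²`. -/
theorem det_lower_bound (A : Matrix (Fin 3) (Fin 3) ℝ)
    (hsymm : A.IsSymm) (htrace : A.trace = 0) :
    18 * A.det ≥ -Real.sqrt 6 * (∑ i, ∑ j, A i j ^ 2) ^ ((3 : ℝ) / 2) ∧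
      ∀ R : ℝ,
        R * (∑ i, ∑ j, A i j ^ 2) + 18 * A.det ≥
          (R - Real.sqrt 6 * Real.sqrt (∑ i, ∑ j, A i j ^ 2)) *
            (∑ i, ∑ j, A i j ^ 2) := by
  set S := ∑ i, ∑ j, A i j ^ 2
  have hS : 0 ≤ S := by positivity
  have hbound := neg_sqrt_six_mul_le_of_sq_le hS (hsymm.fifty_four_mul_det_sq_le htrace)
  refine ⟨?_, fun R ↦ ?_⟩
  · rw [Real.rpow_three_halves hS]
    linear_combination hbound
  · linear_combination hbound
end

section
/- Let A be a real 3×3 symmetric matrix with trace zero and let v ∈ ℝ³. Then 12·‖A v‖² ≤ 8·( Σ_{i,j} A_{ij}² )·‖v‖², where ‖Av‖ and ‖v‖ are Euclidean norms and the middle factor is the squared Frobenius norm of A. Moreover, if equality holds and v ≠ 0, then A has at most two distinct eigenvalues. -/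
/-!
The quadratic form `Q(v) = 8 ‖A‖² ‖v‖² - 12 ‖A v‖²` has Gram matrix `M = 8 ‖A‖² I - 12 AᵀA`.
For traceless symmetric `A` it is an explicit sum of six squares, so `M` is positive
semidefinite. If `Q(v) = 0` with `v ≠ 0`, then `v` lies in the kernel of `M`, hence `det M = 0`.
Writing the characteristic polynomial of `A` as `X³ + pX + q` with `p = -‖A‖²/2`, `q = -det A`,
one finds `det M = -64 (4p³ + 27q²)`: the discriminant vanishes, so the characteristic
polynomial has a double root.
-/

open Polynomial

namespace Matrix

def cottonMatrix {R n : Type*} [CommRing R] [Fintype n] [DecidableEq n] (A : Matrix n n R) :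
    Matrix n n R :=
  (8 * ∑ i, ∑ j, A i j ^ 2) • 1 - (12 : R) • (Aᵀ * A)

section CommRing

variable {R n : Type*} [CommRing R] [Fintype n] [DecidableEq n]

lemma isSymm_cottonMatrix (A : Matrix n n R) : (cottonMatrix A).IsSymm := by
  simp [cottonMatrix, IsSymm, transpose_sub, transpose_smul, transpose_mul]

lemma dotProduct_cottonMatrix_mulVec (A : Matrix n n R) (v : n → R) :
    v ⬝ᵥ cottonMatrix A *ᵥ v =
      8 * (∑ i, ∑ j, A i j ^ 2) * ∑ i, v i ^ 2 - 12 * ∑ i, (A *ᵥ v) i ^ 2 := by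
  rw [cottonMatrix, sub_mulVec, smul_mulVec, smul_mulVec, one_mulVec, ← mulVec_mulVec,
    dotProduct_sub, dotProduct_smul, dotProduct_smul, dotProduct_mulVec v Aᵀ, vecMul_transpose]
  simp only [dotProduct, smul_eq_mul, sq]

lemma IsSymm.exists_eq_of_trace_eq_zero {A : Matrix (Fin 3) (Fin 3) R} (hsymm : A.IsSymm)
    (htrace : A.trace = 0) : ∃ a b d e f : R, A = !![a, d, e; d, b, f; e, f, -(a + b)] := by
  have h22 : A 2 2 = -(A 0 0 + A 1 1) := by
    rw [trace_fin_three] at htrace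
    linear_combination htrace
  refine ⟨A 0 0, A 1 1, A 0 1, A 0 2, A 1 2, ?_⟩
  ext i j
  fin_cases i <;> fin_cases j <;> simp [h22, hsymm.apply 0 1, hsymm.apply 0 2, hsymm.apply 1 2]

-- If `A` has eigenvalues `λ₁ + λ₂ + λ₃ = 0`, then `cottonMatrix A` has eigenvalues such as
-- `8 ‖A‖² - 12 λ₃² = 4 (λ₁ - λ₂)²`, so its determinant is 64 times the discriminant of `A`.
lemma IsSymm.det_cottonMatrix_of_trace_eq_zero {A : Matrix (Fin 3) (Fin 3) R} (hsymm : A.IsSymm)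
    (htrace : A.trace = 0) :
    (cottonMatrix A).det = 32 * (∑ i, ∑ j, A i j ^ 2) ^ 3 - 1728 * A.det ^ 2 := by
  obtain ⟨a, b, d, e, f, rfl⟩ := hsymm.exists_eq_of_trace_eq_zero htrace
  rw [det_fin_three, det_fin_three]
  simp only [cottonMatrix, sub_apply, smul_apply, one_apply, mul_apply, transpose_apply,
    Fin.sum_univ_three, of_apply, cons_val', cons_val_zero, cons_val_one, cons_val,
    cons_val_fin_one, Fin.reduceEq, if_true, if_false, smul_eq_mul]
  ring

end CommRing

lemma IsSymm.charpoly_eq_of_trace_eq_zero {K : Type*} [Field K] [CharZero K]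
    {A : Matrix (Fin 3) (Fin 3) K} (hsymm : A.IsSymm) (htrace : A.trace = 0) :
    A.charpoly = X ^ 3 + C (-(∑ i, ∑ j, A i j ^ 2) / 2) * X + C (-A.det) := by
  obtain ⟨a, b, d, e, f, rfl⟩ := hsymm.exists_eq_of_trace_eq_zero htrace
  have hp : -(∑ i, ∑ j, !![a, d, e; d, b, f; e, f, -(a + b)] i j ^ 2) / 2 =
      -(a ^ 2 + a * b + b ^ 2 + d ^ 2 + e ^ 2 + f ^ 2) := by
    simp only [Fin.sum_univ_three, of_apply, cons_val', cons_val_zero, cons_val_one, cons_val,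
      cons_val_fin_one]
    ring
  rw [hp]
  simp only [charpoly, det_fin_three, charmatrix_apply_eq, charmatrix_apply_ne, ne_eq,
    Fin.reduceEq, not_false_eq_true, of_apply, cons_val', cons_val_zero, cons_val_one, cons_val,
    cons_val_fin_one, map_add, map_sub, map_neg, map_mul, map_pow]
  ring

lemma IsSymm.posSemidef_cottonMatrix_of_trace_eq_zero {A : Matrix (Fin 3) (Fin 3) ℝ}
    (hsymm : A.IsSymm) (htrace : A.trace = 0) : (cottonMatrix A).PosSemidef := by
  refine .of_dotProduct_mulVec_nonneg (isHermitian_iff_isSymm.2 (isSymm_cottonMatrix A))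
    fun v ↦ ?_
  rw [star_trivial, dotProduct_cottonMatrix_mulVec]
  obtain ⟨a, b, d, e, f, rfl⟩ := hsymm.exists_eq_of_trace_eq_zero htrace
  obtain ⟨x, y, z, rfl⟩ : ∃ x y z : ℝ, v = ![x, y, z] :=
    ⟨v 0, v 1, v 2, by ext i; fin_cases i <;> rfl⟩
  have hsos : 0 ≤ 8 * (d * z - e * y) ^ 2 + 8 * (f * x - d * z) ^ 2 + 8 * (e * y - f * x) ^ 2
      + 4 * ((b - a) * z + e * x - f * y) ^ 2 + 4 * ((2 * a + b) * y - d * x + f * z) ^ 2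
      + 4 * ((a + 2 * b) * x - d * y + e * z) ^ 2 := by positivity
  simp only [Fin.sum_univ_three, mulVec, dotProduct, of_apply, cons_val', cons_val_zero,
    cons_val_one, cons_val, cons_val_fin_one]
  linear_combination hsos

end Matrix

theorem Polynomial.exists_X_sub_C_sq_dvd_depressed_cubic {K : Type*} [Field K] [CharZero K]
    {p q : K} (h : 4 * p ^ 3 + 27 * q ^ 2 = 0) : ∃ x, (X - C x) ^ 2 ∣ X ^ 3 + C p * X + C q := by
  obtain ⟨x, rfl, rfl⟩ : ∃ x, p = -3 * x ^ 2 ∧ q = 2 * x ^ 3 := by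
    rcases eq_or_ne p 0 with rfl | hp
    · exact ⟨0, by simp, by simpa using h⟩
    · refine ⟨-3 * q / (2 * p), ?_, ?_⟩
      · field_simp
        linear_combination h
      · field_simp
        linear_combination q * h
  refine ⟨x, X + C (2 * x), ?_⟩
  simp only [map_mul, map_neg, map_pow, map_ofNat]
  ring

open Matrix in
/-- for a real symmetric traceless 3×3 matrix `A` and `v ∈ ℝ³`,
`12 ‖A v‖² ≤ 8 ‖A‖²_F ‖v‖²`; if equality holds and `v ≠ 0`, then `A` has at
most two distinct eigenvalues (its characteristic polynomial has a repeated
root). -/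
theorem cotton_norm_inequality (A : Matrix (Fin 3) (Fin 3) ℝ)
    (hsymm : A.IsSymm) (htrace : A.trace = 0) (v : Fin 3 → ℝ) :
    12 * (∑ i, (A.mulVec v i) ^ 2) ≤
      8 * (∑ i, ∑ j, A i j ^ 2) * (∑ i, v i ^ 2) ∧
    (12 * (∑ i, (A.mulVec v i) ^ 2) =
        8 * (∑ i, ∑ j, A i j ^ 2) * (∑ i, v i ^ 2) → v ≠ 0 →
      ∃ x : ℝ, (Polynomial.X - Polynomial.C x) ^ 2 ∣ A.charpoly) := by
  have hM := hsymm.posSemidef_cottonMatrix_of_trace_eq_zero htrace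
  have hform : star v ⬝ᵥ cottonMatrix A *ᵥ v =
      8 * (∑ i, ∑ j, A i j ^ 2) * ∑ i, v i ^ 2 - 12 * ∑ i, (A *ᵥ v) i ^ 2 := by
    rw [star_trivial, dotProduct_cottonMatrix_mulVec]
  refine ⟨by linarith [hM.dotProduct_mulVec_nonneg v], fun heq hv ↦ ?_⟩
  have hker : cottonMatrix A *ᵥ v = 0 := (hM.dotProduct_mulVec_zero_iff v).1 (by linarith)
  have hdet : (cottonMatrix A).det = 0 := exists_mulVec_eq_zero_iff.1 ⟨v, hv, hker⟩
  rw [hsymm.det_cottonMatrix_of_trace_eq_zero htrace] at hdet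
  rw [hsymm.charpoly_eq_of_trace_eq_zero htrace]
  exact exists_X_sub_C_sq_dvd_depressed_cubic (by linear_combination -hdet / 64)
end

section
/- Let ε > 0, λ ∈ ℝ, and let k be a non-negative integer. Suppose F : [0, ε) → ℝ is of class C^k on [0, ε) and C^∞ on (0, ε), and suppose α : [0, ε) → ℝ is continuous on [0, ε), C^∞ on (0, ε), and satisfies α''(s) + α'(s)/s − λ·α(s) = F(s) for all s ∈ (0, ε). Then α is of class C^{k+2} on [0, ε). -/
open Set Filter MeasureTheory intervalIntegral Topology

noncomputable def Phi (q : ℕ) (G : ℝ → ℝ) (s : ℝ) : ℝ :=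
  if s = 0 then G 0 / (q + 1) else (∫ t in (0:ℝ)..s, t ^ q * G t) / s ^ (q + 1)

lemma phi_zero (q : ℕ) (G : ℝ → ℝ) : Phi q G 0 = G 0 / (q + 1) := if_pos rfl

lemma phi_ne (q : ℕ) (G : ℝ → ℝ) {s : ℝ} (hs : s ≠ 0) :
    Phi q G s = (∫ t in (0:ℝ)..s, t ^ q * G t) / s ^ (q + 1) := if_neg hs

lemma integ_aux {ε : ℝ} {G : ℝ → ℝ} (hG : ContinuousOn G (Ico 0 ε)) {a s : ℝ}
    (ha : 0 ≤ a) (has : a ≤ s) (hs : s < ε) (q : ℕ) :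
    IntervalIntegrable (fun t => t ^ q * G t) MeasureTheory.volume a s := by
  apply ContinuousOn.intervalIntegrable
  rw [uIcc_of_le has]
  exact (continuousOn_pow q).mul (hG.mono (fun t ht => ⟨ha.trans ht.1, lt_of_le_of_lt ht.2 hs⟩))

lemma integral_pow_const (q : ℕ) (c s : ℝ) :
    (∫ t in (0:ℝ)..s, t ^ q * c) = c * s ^ (q + 1) / (q + 1) := by
  rw [intervalIntegral.integral_mul_const, integral_pow]
  ring

lemma phi_sub_const {ε : ℝ} {G : ℝ → ℝ} (hG : ContinuousOn G (Ico 0 ε)) {s : ℝ}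
    (hs : 0 < s) (hsε : s < ε) (q : ℕ) (c : ℝ) :
    Phi q G s - c / (q + 1) = (∫ t in (0:ℝ)..s, t ^ q * (G t - c)) / s ^ (q + 1) := by
  have hint := integ_aux hG le_rfl hs.le hsε q
  have hintc : IntervalIntegrable (fun t => t ^ q * c) MeasureTheory.volume 0 s :=
    (Continuous.mul (continuous_pow q) continuous_const).intervalIntegrable 0 s
  have h1 : (∫ t in (0:ℝ)..s, t ^ q * (G t - c))
      = (∫ t in (0:ℝ)..s, t ^ q * G t) - ∫ t in (0:ℝ)..s, t ^ q * c := by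
    rw [← intervalIntegral.integral_sub hint hintc]
    congr 1; ext t; ring
  have hq : ((q : ℝ) + 1) ≠ 0 := by positivity
  have hsp : s ^ (q + 1) ≠ 0 := by positivity
  rw [phi_ne q G hs.ne', h1, integral_pow_const]
  field_simp

lemma phi_sub_const_bound {ε : ℝ} {G : ℝ → ℝ} (hG : ContinuousOn G (Ico 0 ε)) {s : ℝ}
    (hs : 0 < s) (hsε : s < ε) (q : ℕ) (c e : ℝ)
    (h : ∀ t ∈ Ioc (0:ℝ) s, |G t - c| ≤ e) :
    |Phi q G s - c / (q + 1)| ≤ e := by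
  have he : 0 ≤ e := le_trans (abs_nonneg _) (h s ⟨hs, le_rfl⟩)
  rw [phi_sub_const hG hs hsε q c, abs_div, abs_pow, abs_of_pos hs]
  have hbound : ‖∫ t in (0:ℝ)..s, t ^ q * (G t - c)‖ ≤ s ^ q * e * |s - 0| := by
    apply intervalIntegral.norm_integral_le_of_norm_le_const
    intro t ht
    rw [uIoc_of_le hs.le] at ht
    have h1 : |t ^ q| ≤ s ^ q := by
      rw [abs_pow]
      exact pow_le_pow_left₀ (abs_nonneg t) (by rw [abs_of_pos ht.1]; exact ht.2) q
    calc ‖t ^ q * (G t - c)‖ = |t ^ q| * |G t - c| := abs_mul _ _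
      _ ≤ s ^ q * e := mul_le_mul h1 (h t ht) (abs_nonneg _) (by positivity)
  rw [Real.norm_eq_abs, sub_zero, abs_of_pos hs] at hbound
  calc |∫ t in (0:ℝ)..s, t ^ q * (G t - c)| / s ^ (q + 1) ≤ (s ^ q * e * s) / s ^ (q+1) := by
        apply div_le_div_of_nonneg_right ?_ (by positivity)
        · exact hbound
      _ = e := by field_simp [pow_succ]; ring

lemma cont_integrand {ε : ℝ} {G : ℝ → ℝ} (hG : ContinuousOn G (Ico 0 ε)) {s : ℝ}
    (hs : s ∈ Ioo 0 ε) (q : ℕ) : ContinuousAt (fun t => t ^ q * G t) s := by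
  have hmem : Ico (0:ℝ) ε ∈ 𝓝 s := mem_nhds_iff.2 ⟨Ioo 0 ε, Ioo_subset_Ico_self, isOpen_Ioo, hs⟩
  exact (continuous_pow q).continuousAt.mul (hG.continuousAt hmem)

lemma H_hasDerivAt {ε : ℝ} {G : ℝ → ℝ} (hG : ContinuousOn G (Ico 0 ε)) {s : ℝ}
    (hs : s ∈ Ioo 0 ε) (q : ℕ) :
    HasDerivAt (fun x => ∫ t in (0:ℝ)..x, t ^ q * G t) (s ^ q * G s) s := by
  have hmeas : StronglyMeasurableAtFilter (fun t => t ^ q * G t) (𝓝 s) :=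
    ContinuousOn.stronglyMeasurableAtFilter isOpen_Ioo
      (((continuous_pow q).continuousOn).mul (hG.mono Ioo_subset_Ico_self)) s hs
  exact intervalIntegral.integral_hasDerivAt_right (integ_aux hG le_rfl hs.1.le hs.2 q)
    hmeas (cont_integrand hG hs q)

lemma phi_hasDerivAt_interior_raw {ε : ℝ} {G : ℝ → ℝ} (hG : ContinuousOn G (Ico 0 ε)) {s : ℝ}
    (hs : s ∈ Ioo 0 ε) (q : ℕ) :
    HasDerivAt (Phi q G) (G s / s - (q + 1) * Phi q G s / s) s := by
  have hne : ∀ᶠ x in 𝓝 s, Phi q G x = (∫ t in (0:ℝ)..x, t ^ q * G t) / x ^ (q + 1) := by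
    filter_upwards [eventually_ne_nhds hs.1.ne'] with x hx using phi_ne q G hx
  have hH := H_hasDerivAt hG hs q
  have hpow : HasDerivAt (fun x : ℝ => x ^ (q + 1)) ((q + 1 : ℕ) * s ^ q) s := by
    simpa using hasDerivAt_pow (q + 1) s
  have hsne : s ≠ 0 := hs.1.ne'
  have hspow : s ^ (q + 1) ≠ 0 := pow_ne_zero _ hsne
  have hdiv := hH.div hpow hspow
  have heq : (Phi q G) =ᶠ[𝓝 s] fun x => (∫ t in (0:ℝ)..x, t ^ q * G t) / x ^ (q + 1) := hne
  have := hdiv.congr_of_eventuallyEq heq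
  refine this.congr_deriv ?_
  rw [phi_ne q G hsne]
  field_simp
  push_cast; ring

lemma phi_continuousWithinAt_zero {ε : ℝ} (hε : 0 < ε) {G : ℝ → ℝ}
    (hG : ContinuousOn G (Ico 0 ε)) (q : ℕ) :
    ContinuousWithinAt (Phi q G) (Ico 0 ε) 0 := by
  rw [Metric.continuousWithinAt_iff]
  intro e he
  obtain ⟨δ, hδ, hδ'⟩ := Metric.continuousWithinAt_iff.1 (hG 0 ⟨le_rfl, hε⟩) (e/2) (by linarith)
  refine ⟨min δ ε, by positivity, fun {x} hx hxδ => ?_⟩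
  rcases eq_or_lt_of_le hx.1 with h0 | h0
  · simp [← h0]; positivity
  · have hxε : x < ε := hx.2
    have hb : |Phi q G x - G 0 / (q + 1)| ≤ e / 2 := by
      apply phi_sub_const_bound hG h0 hxε q (G 0) (e/2)
      intro t ht
      have htm : t ∈ Ico (0:ℝ) ε := ⟨ht.1.le, lt_of_le_of_lt ht.2 hxε⟩
      have : dist t 0 < δ := by
        rw [Real.dist_eq, sub_zero, abs_of_pos ht.1]
        calc t ≤ x := ht.2
          _ < min δ ε := by rwa [Real.dist_eq, sub_zero, abs_of_nonneg hx.1] at hxδ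
          _ ≤ δ := min_le_left _ _
      exact (hδ' htm this).le
    rw [Real.dist_eq, phi_zero]
    linarith [hb]

lemma phi_continuousOn {ε : ℝ} (hε : 0 < ε) {G : ℝ → ℝ}
    (hG : ContinuousOn G (Ico 0 ε)) (q : ℕ) : ContinuousOn (Phi q G) (Ico 0 ε) := by
  intro s hs
  rcases eq_or_lt_of_le hs.1 with h0 | h0
  · rw [← h0]; exact phi_continuousWithinAt_zero hε hG q
  · exact ((phi_hasDerivAt_interior_raw hG ⟨h0, hs.2⟩ q).continuousAt).continuousWithinAt

lemma phi_sub_const_linear {ε : ℝ} {G : ℝ → ℝ} (hG : ContinuousOn G (Ico 0 ε)) {s : ℝ}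
    (hs : 0 < s) (hsε : s < ε) (q : ℕ) (c d e : ℝ)
    (h : ∀ t ∈ Ioc (0:ℝ) s, |G t - c - t * d| ≤ e * t) :
    |Phi q G s - c / (q + 1) - s * d / (q + 2)| ≤ e * s := by
  have hint := integ_aux hG le_rfl hs.le hsε q
  have hintc : IntervalIntegrable (fun t => t ^ q * (c + t * d)) MeasureTheory.volume 0 s := by
    apply Continuous.intervalIntegrable; continuity
  have he : 0 ≤ e := by
    have := h s ⟨hs, le_rfl⟩
    nlinarith [abs_nonneg (G s - c - s * d)]
  have h1 : (∫ t in (0:ℝ)..s, t ^ q * (G t - c - t * d))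
      = (∫ t in (0:ℝ)..s, t ^ q * G t) - ∫ t in (0:ℝ)..s, t ^ q * (c + t * d) := by
    rw [← intervalIntegral.integral_sub hint hintc]
    congr 1; ext t; ring
  have h2 : (∫ t in (0:ℝ)..s, t ^ q * (c + t * d))
      = c * s ^ (q + 1) / (q + 1) + d * s ^ (q + 2) / (q + 2) := by
    have ha : (∫ t in (0:ℝ)..s, t ^ q * (c + t * d))
        = (∫ t in (0:ℝ)..s, t ^ q * c) + ∫ t in (0:ℝ)..s, t ^ (q+1) * d := by
      rw [← intervalIntegral.integral_add (f := fun t => t ^ q * c) (g := fun t => t ^ (q+1) * d)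
        ((Continuous.mul (continuous_pow q) continuous_const).intervalIntegrable 0 s)
        ((Continuous.mul (continuous_pow (q+1)) continuous_const).intervalIntegrable 0 s)]
      congr 1; ext t; ring
    rw [ha, integral_pow_const, integral_pow_const]
    push_cast; ring_nf
  have hq1 : ((q : ℝ) + 1) ≠ 0 := by positivity
  have hq2 : ((q : ℝ) + 2) ≠ 0 := by positivity
  have hspow : (0:ℝ) < s ^ (q + 1) := by positivity
  have key : Phi q G s - c / (q + 1) - s * d / (q + 2)
      = (∫ t in (0:ℝ)..s, t ^ q * (G t - c - t * d)) / s ^ (q + 1) := by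
    rw [phi_ne q G hs.ne', h1, h2]
    field_simp
    ring
  rw [key, abs_div, abs_of_pos hspow]
  have hbound : ‖∫ t in (0:ℝ)..s, t ^ q * (G t - c - t * d)‖ ≤ s ^ q * (e * s) * |s - 0| := by
    apply intervalIntegral.norm_integral_le_of_norm_le_const
    intro t ht
    rw [uIoc_of_le hs.le] at ht
    have h1 : |t ^ q| ≤ s ^ q := by
      rw [abs_pow]
      exact pow_le_pow_left₀ (abs_nonneg t) (by rw [abs_of_pos ht.1]; exact ht.2) q
    calc ‖t ^ q * (G t - c - t * d)‖ = |t ^ q| * |G t - c - t * d| := abs_mul _ _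
      _ ≤ s ^ q * (e * t) := mul_le_mul h1 (h t ht) (abs_nonneg _) (by positivity)
      _ ≤ s ^ q * (e * s) := by
          have : e * t ≤ e * s := mul_le_mul_of_nonneg_left ht.2 he
          exact mul_le_mul_of_nonneg_left this (pow_nonneg hs.le q)
  rw [Real.norm_eq_abs, sub_zero, abs_of_pos hs] at hbound
  calc |∫ t in (0:ℝ)..s, t ^ q * (G t - c - t * d)| / s ^ (q + 1)
      ≤ (s ^ q * (e * s) * s) / s ^ (q + 1) := by gcongr
    _ = e * s := by field_simp [pow_succ]; ring

section derivs
variable {ε : ℝ} {G G' : ℝ → ℝ}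

lemma parts (hG : ContinuousOn G (Ico 0 ε)) (hG' : ContinuousOn G' (Ico 0 ε))
    (hd : ∀ t ∈ Ioo (0:ℝ) ε, HasDerivAt G (G' t) t) {s : ℝ} (hs : s ∈ Ioo 0 ε) (q : ℕ) :
    (∫ t in (0:ℝ)..s, t ^ (q+1) * G' t)
      = s ^ (q+1) * G s - (q + 1 : ℝ) * ∫ t in (0:ℝ)..s, t ^ q * G t := by
  have hint1 := integ_aux hG le_rfl hs.1.le hs.2 q
  have hint2 := integ_aux hG' le_rfl hs.1.le hs.2 (q+1)
  have hIcc : Icc (0:ℝ) s ⊆ Ico 0 ε := fun t ht => ⟨ht.1, lt_of_le_of_lt ht.2 hs.2⟩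
  have hcontf : ContinuousOn (fun t => t ^ (q+1) * G t) (Icc 0 s) :=
    ((continuous_pow (q+1)).continuousOn).mul (hG.mono hIcc)
  have hderiv : ∀ x ∈ Ioo (0:ℝ) s, HasDerivWithinAt (fun t => t ^ (q+1) * G t)
      ((q + 1 : ℝ) * x ^ q * G x + x ^ (q+1) * G' x) (Ioi x) x := by
    intro x hx
    have hx' : x ∈ Ioo (0:ℝ) ε := ⟨hx.1, lt_trans hx.2 hs.2⟩
    have h1 : HasDerivAt (fun t : ℝ => t ^ (q+1)) ((q+1 : ℕ) * x ^ q) x := hasDerivAt_pow (q+1) x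
    have := h1.mul (hd x hx')
    push_cast at this ⊢
    exact this.hasDerivWithinAt
  have hintf' : IntervalIntegrable
      (fun x => (q + 1 : ℝ) * x ^ q * G x + x ^ (q+1) * G' x) MeasureTheory.volume 0 s := by
    apply ContinuousOn.intervalIntegrable
    rw [uIcc_of_le hs.1.le]
    exact ((continuous_const.mul (continuous_pow q)).continuousOn.mul (hG.mono hIcc)).add
      (((continuous_pow (q+1)).continuousOn).mul (hG'.mono hIcc))
  have key := intervalIntegral.integral_eq_sub_of_hasDeriv_right_of_le hs.1.le hcontf hderiv hintf'
  have hsplit : (∫ x in (0:ℝ)..s, ((q + 1 : ℝ) * x ^ q * G x + x ^ (q+1) * G' x))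
      = (q + 1 : ℝ) * (∫ t in (0:ℝ)..s, t ^ q * G t) + ∫ t in (0:ℝ)..s, t ^ (q+1) * G' t := by
    rw [← intervalIntegral.integral_const_mul]
    rw [← intervalIntegral.integral_add (hint1.const_mul _) hint2]
    congr 1; ext t; ring
  rw [hsplit] at key
  have h0 : (0:ℝ) ^ (q+1) * G 0 = 0 := by simp
  rw [h0, sub_zero] at key
  linarith [key]

lemma phi_hasDerivAt_interior (hG : ContinuousOn G (Ico 0 ε)) (hG' : ContinuousOn G' (Ico 0 ε))
    (hd : ∀ t ∈ Ioo (0:ℝ) ε, HasDerivAt G (G' t) t) {s : ℝ} (hs : s ∈ Ioo 0 ε) (q : ℕ) :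
    HasDerivAt (Phi q G) (Phi (q+1) G' s) s := by
  have raw := phi_hasDerivAt_interior_raw hG hs q
  convert raw using 1
  have hsne : s ≠ 0 := hs.1.ne'
  have hspow : s ^ (q + 2) ≠ 0 := pow_ne_zero _ hsne
  rw [phi_ne (q+1) G' hsne, parts hG hG' hd hs q, phi_ne q G hsne]
  field_simp
  ring
end derivs

section derivzero
variable {ε : ℝ} {G G' : ℝ → ℝ}

lemma phi_hasDerivWithinAt_zero (hε : 0 < ε) (hG : ContinuousOn G (Ico 0 ε))
    (hd0 : HasDerivWithinAt G (G' 0) (Ico 0 ε) 0) (q : ℕ) :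
    HasDerivWithinAt (Phi q G) (Phi (q+1) G' 0) (Ico 0 ε) 0 := by
  rw [hasDerivWithinAt_iff_tendsto_slope]
  rw [phi_zero]
  rw [Metric.tendsto_nhdsWithin_nhds]
  intro e he
  have hlo := hd0.isLittleO
  have hev := hlo.def (show (0:ℝ) < e/2 by linarith)
  rw [eventually_nhdsWithin_iff, Metric.eventually_nhds_iff] at hev
  obtain ⟨δ, hδ, hδ'⟩ := hev
  refine ⟨min δ ε, by positivity, fun {s} hs hsδ => ?_⟩
  obtain ⟨hsI, hs0⟩ := hs
  have hspos : 0 < s := lt_of_le_of_ne hsI.1 (Ne.symm hs0)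
  have hsδ' : s < δ := by
    rw [Real.dist_eq, sub_zero, abs_of_pos hspos] at hsδ
    exact lt_of_lt_of_le hsδ (min_le_left _ _)
  have hbnd : ∀ t ∈ Ioc (0:ℝ) s, |G t - G 0 - t * G' 0| ≤ (e/2) * t := by
    intro t ht
    have htI : t ∈ Ico (0:ℝ) ε := ⟨ht.1.le, lt_of_le_of_lt ht.2 hsI.2⟩
    have htd : dist t 0 < δ := by
      rw [Real.dist_eq, sub_zero, abs_of_pos ht.1]
      exact lt_of_le_of_lt ht.2 hsδ'
    have := hδ' htd htI
    simp only [sub_zero, smul_eq_mul, Real.norm_eq_abs] at this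
    rw [abs_of_pos ht.1] at this
    convert this using 2
  have key := phi_sub_const_linear hG hspos hsI.2 q (G 0) (G' 0) (e/2) hbnd
  have hq2 : ((q:ℝ) + 2) ≠ 0 := by positivity
  have hq1 : ((q:ℝ) + 1) ≠ 0 := by positivity
  have hcast : ((q + 1 : ℕ) : ℝ) + 1 = (q : ℝ) + 2 := by push_cast; ring
  rw [hcast, Real.dist_eq]
  have hthis : slope (Phi q G) 0 s - G' 0 / ((q:ℝ) + 2)
      = (Phi q G s - G 0 / ((q:ℝ) + 1) - s * G' 0 / ((q:ℝ) + 2)) / s := by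
    rw [slope_def_field, phi_zero]
    field_simp [hspos.ne']
    ring
  rw [hthis, abs_div, abs_of_pos hspos, div_lt_iff₀ hspos]
  calc |Phi q G s - G 0 / ((q:ℝ) + 1) - s * G' 0 / ((q:ℝ) + 2)| ≤ (e/2) * s := key
    _ < e * s := by nlinarith
end derivzero

section phimain
variable {ε : ℝ}

lemma phi_hasDerivWithinAt (hε : 0 < ε) {G G' : ℝ → ℝ} (hG : ContinuousOn G (Ico 0 ε))
    (hG' : ContinuousOn G' (Ico 0 ε))
    (hd : ∀ t ∈ Ioo (0:ℝ) ε, HasDerivAt G (G' t) t)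
    (hd0 : HasDerivWithinAt G (G' 0) (Ico 0 ε) 0)
    {s : ℝ} (hs : s ∈ Ico 0 ε) (q : ℕ) :
    HasDerivWithinAt (Phi q G) (Phi (q+1) G' s) (Ico 0 ε) s := by
  rcases eq_or_lt_of_le hs.1 with h0 | h0
  · rw [← h0] at hs ⊢
    exact phi_hasDerivWithinAt_zero hε hG hd0 q
  · exact (phi_hasDerivAt_interior hG hG' hd ⟨h0, hs.2⟩ q).hasDerivWithinAt

lemma ico_mem_nhds_interior {s : ℝ} (hs : s ∈ Ioo (0:ℝ) ε) : Ico (0:ℝ) ε ∈ 𝓝 s :=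
  mem_nhds_iff.2 ⟨Ioo 0 ε, Ioo_subset_Ico_self, isOpen_Ioo, hs⟩

lemma phi_contDiffOn (hε : 0 < ε) :
    ∀ (m : ℕ) (q : ℕ) (G : ℝ → ℝ), ContDiffOn ℝ m G (Ico 0 ε) →
      ContDiffOn ℝ m (Phi q G) (Ico 0 ε) := by
  intro m
  induction m with
  | zero =>
    intro q G hG
    rw [Nat.cast_zero, contDiffOn_zero] at hG ⊢
    exact phi_continuousOn hε hG q
  | succ m ih =>
    intro q G hG
    have hu : UniqueDiffOn ℝ (Ico (0:ℝ) ε) := uniqueDiffOn_Ico 0 ε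
    have hcast : ((m + 1 : ℕ) : WithTop ℕ∞) = (m : WithTop ℕ∞) + 1 := by norm_cast
    rw [hcast] at hG ⊢
    set G' := derivWithin G (Ico 0 ε) with hG'def
    have hdiff : DifferentiableOn ℝ G (Ico 0 ε) :=
      hG.differentiableOn (by simp)
    have hG'cd : ContDiffOn ℝ m G' (Ico 0 ε) :=
      ((contDiffOn_succ_iff_derivWithin hu).1 hG).2.2
    have hG'cont : ContinuousOn G' (Ico 0 ε) := hG'cd.continuousOn
    have hGcont : ContinuousOn G (Ico 0 ε) := hG.continuousOn
    have hd : ∀ t ∈ Ioo (0:ℝ) ε, HasDerivAt G (G' t) t := by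
      intro t ht
      exact ((hdiff t (Ioo_subset_Ico_self ht)).hasDerivWithinAt).hasDerivAt
        (ico_mem_nhds_interior ht)
    have hd0 : HasDerivWithinAt G (G' 0) (Ico 0 ε) 0 :=
      (hdiff 0 ⟨le_rfl, hε⟩).hasDerivWithinAt
    rw [contDiffOn_succ_iff_derivWithin hu]
    refine ⟨fun s hs => (phi_hasDerivWithinAt hε hGcont hG'cont hd hd0 hs q).differentiableWithinAt,
      ?_, ?_⟩
    · intro h; simp at h
    · exact (ih (q+1) G' hG'cd).congr fun s hs =>
        ((phi_hasDerivWithinAt hε hGcont hG'cont hd hd0 hs q).derivWithin (hu s hs))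
end phimain

section core
variable {ε : ℝ} {G α : ℝ → ℝ}

lemma alpha_hasDerivAt (hαsmooth : ContDiffOn ℝ (⊤ : ℕ∞) α (Ioo 0 ε)) {x : ℝ} (hx : x ∈ Ioo (0:ℝ) ε) :
    HasDerivAt α (deriv α x) x := by
  have h2 : ContDiffOn ℝ 2 α (Ioo 0 ε) := hαsmooth.of_le (WithTop.coe_le_coe.2 le_top)
  have := (h2.differentiableOn (by norm_num)).differentiableAt (isOpen_Ioo.mem_nhds hx)
  exact this.hasDerivAt

lemma deriv_alpha_hasDerivAt (hαsmooth : ContDiffOn ℝ (⊤ : ℕ∞) α (Ioo 0 ε)) {x : ℝ}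
    (hx : x ∈ Ioo (0:ℝ) ε) :
    HasDerivAt (deriv α) (deriv (deriv α) x) x := by
  have h2 : ContDiffOn ℝ 2 α (Ioo 0 ε) := hαsmooth.of_le (WithTop.coe_le_coe.2 le_top)
  have hd : ContDiffOn ℝ 1 (deriv α) (Ioo 0 ε) :=
    h2.deriv_of_isOpen isOpen_Ioo (by norm_num)
  have := (hd.differentiableOn (by norm_num)).differentiableAt (isOpen_Ioo.mem_nhds hx)
  exact this.hasDerivAt

lemma psi_hasDerivAt (hGcont : ContinuousOn G (Ico 0 ε))
    (hαsmooth : ContDiffOn ℝ (⊤ : ℕ∞) α (Ioo 0 ε))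
    (hode' : ∀ s ∈ Ioo (0:ℝ) ε, deriv (deriv α) s + deriv α s / s = G s)
    {x : ℝ} (hx : x ∈ Ioo (0:ℝ) ε) :
    HasDerivAt (fun s => s * deriv α s - ∫ t in (0:ℝ)..s, t ^ 1 * G t) 0 x := by
  have h1 := (hasDerivAt_id x).mul (deriv_alpha_hasDerivAt hαsmooth hx)
  have h2 := H_hasDerivAt hGcont hx 1
  have h3 := h1.sub h2
  refine h3.congr_deriv ?_
  have hode := hode' x hx
  have hxne : x ≠ 0 := hx.1.ne'
  field_simp at hode ⊢
  simp only [id_eq]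
  nlinarith [hode]

lemma psi_const (hGcont : ContinuousOn G (Ico 0 ε))
    (hαsmooth : ContDiffOn ℝ (⊤ : ℕ∞) α (Ioo 0 ε))
    (hode' : ∀ s ∈ Ioo (0:ℝ) ε, deriv (deriv α) s + deriv α s / s = G s)
    {a b : ℝ} (ha : a ∈ Ioo (0:ℝ) ε) (hb : b ∈ Ioo (0:ℝ) ε) :
    a * deriv α a - (∫ t in (0:ℝ)..a, t ^ 1 * G t)
      = b * deriv α b - (∫ t in (0:ℝ)..b, t ^ 1 * G t) := by
  have hsub : uIcc a b ⊆ Ioo (0:ℝ) ε := (Set.ordConnected_Ioo).uIcc_subset ha hb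
  have key := intervalIntegral.integral_eq_sub_of_hasDerivAt
    (f := fun s => s * deriv α s - ∫ t in (0:ℝ)..s, t ^ 1 * G t) (f' := fun _ => (0:ℝ))
    (fun x hx => psi_hasDerivAt hGcont hαsmooth hode' (hsub hx))
    (intervalIntegrable_const)
  simp only [intervalIntegral.integral_zero] at key
  linarith [key]
end core

section czero
variable {ε : ℝ} {G α : ℝ → ℝ}

lemma C_eq_zero (hε : 0 < ε) (hGcont : ContinuousOn G (Ico 0 ε))
    (hαcont : ContinuousOn α (Ico 0 ε))
    (hαsmooth : ContDiffOn ℝ (⊤ : ℕ∞) α (Ioo 0 ε))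
    (hode' : ∀ s ∈ Ioo (0:ℝ) ε, deriv (deriv α) s + deriv α s / s = G s) :
    (ε/2) * deriv α (ε/2) - (∫ t in (0:ℝ)..(ε/2), t ^ 1 * G t) = 0 := by
  set s0 : ℝ := ε/2 with hs0def
  have hs0 : s0 ∈ Ioo (0:ℝ) ε := ⟨by positivity, by simp [hs0def]; linarith⟩
  set C : ℝ := s0 * deriv α s0 - (∫ t in (0:ℝ)..s0, t ^ 1 * G t) with hCdef
  set β : ℝ → ℝ := fun s => s * Phi 1 G s with hβdef
  have hβcont : ContinuousOn β (Ico 0 ε) :=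
    continuous_id.continuousOn.mul (phi_continuousOn hε hGcont 1)
  have hβint : IntegrableOn β (Icc 0 s0) MeasureTheory.volume :=
    (hβcont.mono (fun t ht => ⟨ht.1, lt_of_le_of_lt ht.2 hs0.2⟩)).integrableOn_Icc
  -- key identity for r ∈ Ioo 0 s0
  have key : ∀ r ∈ Ioo (0:ℝ) s0,
      C * Real.log (s0 / r)
        = α s0 - α r - ((∫ t in (0:ℝ)..s0, β t) - ∫ t in (0:ℝ)..r, β t) := by
    intro r hr
    have hrε : r ∈ Ioo (0:ℝ) ε := ⟨hr.1, lt_trans hr.2 hs0.2⟩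
    have hIccsub : Icc r s0 ⊆ Ioo (0:ℝ) ε := fun x hx => ⟨lt_of_lt_of_le hr.1 hx.1,
      lt_of_le_of_lt hx.2 hs0.2⟩
    have hderiv : ∀ x ∈ uIcc r s0, HasDerivAt α (C / x + β x) x := by
      intro x hx
      rw [uIcc_of_le hr.2.le] at hx
      have hxI : x ∈ Ioo (0:ℝ) ε := hIccsub hx
      have hxne : x ≠ 0 := hxI.1.ne'
      have hC : x * deriv α x - (∫ t in (0:ℝ)..x, t ^ 1 * G t) = C :=
        psi_const hGcont hαsmooth hode' hxI hs0
      have hval : C / x + β x = deriv α x := by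
        rw [hβdef]
        simp only
        rw [phi_ne 1 G hxne]
        rw [← hC]
        have hx2 : x ^ (1 + 1) = x * x := by ring
        field_simp [hx2]
        ring
      rw [hval]
      exact alpha_hasDerivAt hαsmooth hxI
    have hint : IntervalIntegrable (fun x => C / x + β x) MeasureTheory.volume r s0 := by
      apply ContinuousOn.intervalIntegrable
      rw [uIcc_of_le hr.2.le]
      refine (ContinuousOn.div continuousOn_const continuousOn_id
        (fun x hx => (hIccsub hx).1.ne')).add
        (hβcont.mono (fun x hx => ⟨(hIccsub hx).1.le, (hIccsub hx).2⟩))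
    have hFTC := intervalIntegral.integral_eq_sub_of_hasDerivAt hderiv hint
    have hsplit : (∫ x in r..s0, (C / x + β x))
        = (∫ x in r..s0, C / x) + ∫ x in r..s0, β x := by
      apply intervalIntegral.integral_add
      · apply ContinuousOn.intervalIntegrable
        rw [uIcc_of_le hr.2.le]
        exact ContinuousOn.div continuousOn_const continuousOn_id
          (fun x hx => (hIccsub hx).1.ne')
      · apply ContinuousOn.intervalIntegrable
        rw [uIcc_of_le hr.2.le]
        exact hβcont.mono (fun x hx => ⟨(hIccsub hx).1.le, (hIccsub hx).2⟩)
    have hlog : (∫ x in r..s0, C / x) = C * Real.log (s0 / r) := by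
      have h0 : (0:ℝ) ∉ uIcc r s0 := by
        rw [uIcc_of_le hr.2.le]
        intro h; exact absurd h.1 (not_le.2 hr.1)
      have : (∫ x in r..s0, C / x) = C * ∫ x in r..s0, 1 / x := by
        rw [← intervalIntegral.integral_const_mul]
        congr 1; ext x; ring
      rw [this, integral_one_div h0]
    have hsub : (∫ x in r..s0, β x) = (∫ t in (0:ℝ)..s0, β t) - ∫ t in (0:ℝ)..r, β t := by
      rw [intervalIntegral.integral_interval_sub_left]
      · exact (hβcont.mono (fun t ht => ⟨(uIcc_of_le hs0.1.le ▸ ht).1,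
          lt_of_le_of_lt (uIcc_of_le hs0.1.le ▸ ht).2 hs0.2⟩)).intervalIntegrable
      · apply ContinuousOn.intervalIntegrable
        exact hβcont.mono (fun t ht => ⟨(uIcc_of_le hr.1.le ▸ ht).1,
          lt_of_le_of_lt (uIcc_of_le hr.1.le ▸ ht).2 hrε.2⟩)
    rw [hsplit, hlog, hsub] at hFTC
    linarith [hFTC]
  -- now take the limit r → 0⁺
  have hne : Filter.NeBot (𝓝[>] (0:ℝ)) := by infer_instance
  have hmem : Ioo (0:ℝ) s0 ∈ 𝓝[>] (0:ℝ) := Ioo_mem_nhdsGT_of_mem ⟨le_rfl, hs0.1⟩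
  have htop : Tendsto (fun r => Real.log (s0 / r)) (𝓝[>] (0:ℝ)) atTop := by
    have h1 : Tendsto Real.log (𝓝[>] (0:ℝ)) atBot := Real.tendsto_log_nhdsGT_zero
    have h2 : Tendsto (fun r : ℝ => Real.log s0 - Real.log r) (𝓝[>] (0:ℝ)) atTop :=
      tendsto_atTop_add_const_left _ _ (tendsto_neg_atBot_atTop.comp h1)
    apply h2.congr'
    filter_upwards [hmem] with r hr
    rw [Real.log_div hs0.1.ne' hr.1.ne']
  have hnum : Tendsto (fun r => α s0 - α r - ((∫ t in (0:ℝ)..s0, β t) - ∫ t in (0:ℝ)..r, β t))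
      (𝓝[>] (0:ℝ)) (𝓝 (α s0 - α 0 - ((∫ t in (0:ℝ)..s0, β t) - 0))) := by
    have hα0 : Tendsto α (𝓝[>] (0:ℝ)) (𝓝 (α 0)) := by
      rw [← nhdsWithin_Ioo_eq_nhdsGT hε]
      exact (hαcont 0 ⟨le_rfl, hε⟩).tendsto.mono_left (nhdsWithin_mono 0 Ioo_subset_Ico_self)
    have hprim : Tendsto (fun r => ∫ t in (0:ℝ)..r, β t) (𝓝[>] (0:ℝ)) (𝓝 0) := by
      have hc := intervalIntegral.continuousOn_primitive_interval
        (by rwa [uIcc_of_le hs0.1.le] : IntegrableOn β (uIcc 0 s0) MeasureTheory.volume)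
      have hc0 := (hc 0 (by rw [uIcc_of_le hs0.1.le]; exact ⟨le_rfl, hs0.1.le⟩)).tendsto
      rw [intervalIntegral.integral_same] at hc0
      rw [← nhdsWithin_Ioo_eq_nhdsGT hs0.1]
      refine hc0.mono_left (nhdsWithin_mono 0 ?_)
      rw [uIcc_of_le hs0.1.le]
      exact Ioo_subset_Icc_self
    exact (tendsto_const_nhds.sub hα0).sub (tendsto_const_nhds.sub hprim)
  have hdiv : Tendsto (fun r => (α s0 - α r - ((∫ t in (0:ℝ)..s0, β t) - ∫ t in (0:ℝ)..r, β t))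
      / Real.log (s0 / r)) (𝓝[>] (0:ℝ)) (𝓝 0) := hnum.div_atTop htop
  have hconst : Tendsto (fun _ : ℝ => C) (𝓝[>] (0:ℝ)) (𝓝 0) := by
    apply hdiv.congr'
    filter_upwards [hmem] with r hr
    have hlogpos : 0 < Real.log (s0 / r) :=
      Real.log_pos (by rw [lt_div_iff₀ hr.1]; simpa using hr.2)
    rw [← key r hr]
    field_simp
  exact tendsto_nhds_unique hconst tendsto_const_nhds |>.symm ▸ rfl
end czero

section alphaderiv
variable {ε : ℝ} {G α : ℝ → ℝ}

lemma deriv_alpha_eq (hε : 0 < ε) (hGcont : ContinuousOn G (Ico 0 ε))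
    (hαcont : ContinuousOn α (Ico 0 ε))
    (hαsmooth : ContDiffOn ℝ (⊤ : ℕ∞) α (Ioo 0 ε))
    (hode' : ∀ s ∈ Ioo (0:ℝ) ε, deriv (deriv α) s + deriv α s / s = G s)
    {x : ℝ} (hx : x ∈ Ioo (0:ℝ) ε) :
    deriv α x = x * Phi 1 G x := by
  have hs0 : (ε/2) ∈ Ioo (0:ℝ) ε := ⟨by positivity, by linarith⟩
  have hC := C_eq_zero hε hGcont hαcont hαsmooth hode'
  have hψ := psi_const hGcont hαsmooth hode' hx hs0
  rw [hC] at hψ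
  have hxne : x ≠ 0 := hx.1.ne'
  have hψ' : (∫ t in (0:ℝ)..x, t ^ 1 * G t) = x * deriv α x := by linarith [hψ]
  rw [phi_ne 1 G hxne, hψ']
  have hx2 : x ^ (1 + 1) = x * x := by ring
  rw [hx2]
  field_simp

lemma alpha_hasDerivWithinAt (hε : 0 < ε) (hGcont : ContinuousOn G (Ico 0 ε))
    (hαcont : ContinuousOn α (Ico 0 ε))
    (hαsmooth : ContDiffOn ℝ (⊤ : ℕ∞) α (Ioo 0 ε))
    (hode' : ∀ s ∈ Ioo (0:ℝ) ε, deriv (deriv α) s + deriv α s / s = G s)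
    {s : ℝ} (hs : s ∈ Ico (0:ℝ) ε) :
    HasDerivWithinAt α (s * Phi 1 G s) (Ico 0 ε) s := by
  set β : ℝ → ℝ := fun s => s * Phi 1 G s with hβdef
  have hβcont : ContinuousOn β (Ico 0 ε) :=
    continuous_id.continuousOn.mul (phi_continuousOn hε hGcont 1)
  have hint : ∀ x ∈ Ioo (0:ℝ) ε, HasDerivAt α (β x) x := by
    intro x hx
    have := alpha_hasDerivAt hαsmooth hx
    rwa [deriv_alpha_eq hε hGcont hαcont hαsmooth hode' hx] at this
  rcases eq_or_lt_of_le hs.1 with h0 | h0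
  · -- s = 0
    rw [← h0]
    have hIcomem : Ico (0:ℝ) ε ∈ 𝓝[Ici 0] (0:ℝ) := by
      rw [← Set.Ici_inter_Iio]
      exact inter_mem_nhdsWithin _ (Iio_mem_nhds hε)
    have hIoimem : Ico (0:ℝ) ε ∈ 𝓝[Ioi 0] (0:ℝ) := by
      refine mem_nhdsWithin.2 ⟨Iio ε, isOpen_Iio, hε, fun x hx => ⟨le_of_lt hx.2, hx.1⟩⟩

    have hβint0 : IntervalIntegrable β MeasureTheory.volume 0 0 := by
      apply ContinuousOn.intervalIntegrable
      rw [uIcc_self]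
      exact hβcont.mono (by simp [hε.le, hε])
    have hmeas : StronglyMeasurableAtFilter β (𝓝[Ioi 0] (0:ℝ)) MeasureTheory.volume :=
      ⟨Ico 0 ε, hIoimem, hβcont.aestronglyMeasurable measurableSet_Ico⟩
    have hcw : ContinuousWithinAt β (Ioi 0) 0 :=
      (hβcont 0 ⟨le_rfl, hε⟩).mono_of_mem_nhdsWithin hIoimem
    have hg : HasDerivWithinAt (fun u => α 0 + ∫ t in (0:ℝ)..u, β t) (β 0) (Ici 0) 0 :=
      (intervalIntegral.integral_hasDerivWithinAt_right (s := Ici 0) (t := Ioi 0)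
        hβint0 hmeas hcw).const_add (α 0)
    have hαg : ∀ y ∈ Ico (0:ℝ) ε, α y = α 0 + ∫ t in (0:ℝ)..y, β t := by
      intro y hy
      rcases eq_or_lt_of_le hy.1 with h0' | h0'
      · simp [← h0']
      · have hIcc : Icc (0:ℝ) y ⊆ Ico 0 ε := fun t ht => ⟨ht.1, lt_of_le_of_lt ht.2 hy.2⟩
        have hFTC := intervalIntegral.integral_eq_sub_of_hasDeriv_right_of_le h0'.le
          (hαcont.mono hIcc)
          (fun x hx => (hint x ⟨hx.1, lt_trans hx.2 hy.2⟩).hasDerivWithinAt)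
          (by
            apply ContinuousOn.intervalIntegrable
            rw [uIcc_of_le h0'.le]
            exact hβcont.mono hIcc)
        linarith [hFTC]
    exact ((hg.mono Ico_subset_Ici_self).congr hαg (hαg 0 ⟨le_rfl, hε⟩)).congr_deriv rfl
  · exact (hint s ⟨h0, hs.2⟩).hasDerivWithinAt
end alphaderiv

section betaderiv
variable {ε : ℝ} {G : ℝ → ℝ}

lemma beta_hasDerivWithinAt (hε : 0 < ε) (hGcont : ContinuousOn G (Ico 0 ε))
    {s : ℝ} (hs : s ∈ Ico (0:ℝ) ε) :
    HasDerivWithinAt (fun x => x * Phi 1 G x) (G s - Phi 1 G s) (Ico 0 ε) s := by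
  rcases eq_or_lt_of_le hs.1 with h0 | h0
  · rw [← h0]
    rw [hasDerivWithinAt_iff_tendsto_slope]
    have hval : G 0 - Phi 1 G 0 = Phi 1 G 0 := by
      rw [phi_zero]; push_cast; ring
    rw [hval]
    have h1 : Tendsto (Phi 1 G) (𝓝[Ico 0 ε \ {0}] 0) (𝓝 (Phi 1 G 0)) :=
      (phi_continuousWithinAt_zero hε hGcont 1).tendsto.mono_left
        (nhdsWithin_mono _ diff_subset)
    apply h1.congr'
    filter_upwards [self_mem_nhdsWithin] with x hx
    have hxne : x ≠ 0 := fun h => hx.2 (by simp [h])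
    rw [slope_def_field]
    field_simp
    ring
  · have h1 := phi_hasDerivAt_interior_raw hGcont ⟨h0, hs.2⟩ 1
    have h2 := (hasDerivAt_id s).mul h1
    have hsne : s ≠ 0 := h0.ne'
    refine HasDerivAt.hasDerivWithinAt ?_
    refine h2.congr_deriv ?_
    push_cast
    field_simp
    simp only [id_eq]
    ring
end betaderiv

section coresec
variable {ε : ℝ} {G α : ℝ → ℝ}

theorem core_reg (hε : 0 < ε) (hGcont : ContinuousOn G (Ico 0 ε))
    (hαcont : ContinuousOn α (Ico 0 ε))
    (hαsmooth : ContDiffOn ℝ (⊤ : ℕ∞) α (Ioo 0 ε))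
    (hode' : ∀ s ∈ Ioo (0:ℝ) ε, deriv (deriv α) s + deriv α s / s = G s)
    (m : ℕ) (hGm : ContDiffOn ℝ m G (Ico 0 ε)) :
    ContDiffOn ℝ ((m + 2 : ℕ)) α (Ico 0 ε) := by
  have hu : UniqueDiffOn ℝ (Ico (0:ℝ) ε) := uniqueDiffOn_Ico 0 ε
  have hβd : ∀ s ∈ Ico (0:ℝ) ε, HasDerivWithinAt (fun x => x * Phi 1 G x)
      (G s - Phi 1 G s) (Ico 0 ε) s := fun s hs => beta_hasDerivWithinAt hε hGcont hs
  have hβcd : ContDiffOn ℝ ((m + 1 : ℕ)) (fun x => x * Phi 1 G x) (Ico 0 ε) := by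
    have hcast : ((m + 1 : ℕ) : WithTop ℕ∞) = (m : WithTop ℕ∞) + 1 := by norm_cast
    rw [hcast, contDiffOn_succ_iff_derivWithin hu]
    refine ⟨fun s hs => (hβd s hs).differentiableWithinAt, by intro h; simp at h, ?_⟩
    exact (hGm.sub (phi_contDiffOn hε m 1 G hGm)).congr
      fun s hs => (hβd s hs).derivWithin (hu s hs)
  have hαd : ∀ s ∈ Ico (0:ℝ) ε, HasDerivWithinAt α (s * Phi 1 G s) (Ico 0 ε) s :=
    fun s hs => alpha_hasDerivWithinAt hε hGcont hαcont hαsmooth hode' hs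
  have hcast2 : ((m + 2 : ℕ) : WithTop ℕ∞) = ((m + 1 : ℕ) : WithTop ℕ∞) + 1 := by norm_cast
  rw [hcast2, contDiffOn_succ_iff_derivWithin hu]
  refine ⟨fun s hs => (hαd s hs).differentiableWithinAt, by intro h; simp at h, ?_⟩
  exact hβcd.congr fun s hs => (hαd s hs).derivWithin (hu s hs)
end coresec

/-- Appendix C, Lemma: regularity up to the boundary for the
degenerate ODE `α'' + α'/s - λ α = F` on `[0, ε)`. -/
theorem degenerate_ode_regularity (ε : ℝ) (hε : 0 < ε) (lam : ℝ) (k : ℕ)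
    (F α : ℝ → ℝ)
    (hF : ContDiffOn ℝ k F (Set.Ico 0 ε))
    (hFsmooth : ContDiffOn ℝ (⊤ : ℕ∞) F (Set.Ioo 0 ε))
    (hαcont : ContinuousOn α (Set.Ico 0 ε))
    (hαsmooth : ContDiffOn ℝ (⊤ : ℕ∞) α (Set.Ioo 0 ε))
    (hode : ∀ s ∈ Set.Ioo (0 : ℝ) ε,
      deriv (deriv α) s + deriv α s / s - lam * α s = F s) :
    ContDiffOn ℝ (k + 2) α (Set.Ico 0 ε) := by
  set G : ℝ → ℝ := fun s => F s + lam * α s with hGdef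
  have hGcont : ContinuousOn G (Ico 0 ε) :=
    (hF.continuousOn).add (continuousOn_const.mul hαcont)
  have hode' : ∀ s ∈ Ioo (0:ℝ) ε, deriv (deriv α) s + deriv α s / s = G s := by
    intro s hs
    have := hode s hs
    simp only [hGdef]
    linarith
  have step : ∀ m : ℕ, m ≤ k → ContDiffOn ℝ m α (Set.Ico 0 ε) →
      ContDiffOn ℝ ((m + 2 : ℕ)) α (Set.Ico 0 ε) := by
    intro m hm hα
    apply core_reg hε hGcont hαcont hαsmooth hode' m
    exact (hF.of_le (by exact_mod_cast hm)).add (contDiffOn_const.mul hα)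
  have main : ∀ m : ℕ, m ≤ k → ContDiffOn ℝ m α (Set.Ico 0 ε) := by
    intro m
    induction m with
    | zero =>
      intro _
      rw [Nat.cast_zero, contDiffOn_zero]
      exact hαcont
    | succ m ih =>
      intro hm
      have h1 := ih (le_trans (Nat.le_succ m) hm)
      have h2 := step m (by omega) h1
      exact h2.of_le (by exact_mod_cast (by omega : m + 1 ≤ m + 2))
  have final := step k le_rfl (main k le_rfl)
  have hcast : ((k + 2 : ℕ) : WithTop ℕ∞) = (k : WithTop ℕ∞) + 2 := by norm_cast
  rwa [hcast] at final
end

section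
/- Let ε > 0 and λ ∈ ℝ. Suppose F : [0, ε) → ℝ is continuous on [0, ε) and C^∞ on (0, ε), and α : [0, ε) → ℝ is continuous on [0, ε), C^∞ on (0, ε), and satisfies α''(s) + α'(s)/s − λ·α(s) = F(s) for all s ∈ (0, ε). Then α is of class C² on [0, ε), with α'(0) = 0 and α''(0) = (λ·α(0) + F(0))/2. -/
open Set Filter intervalIntegral
open scoped Topology

/-- Auxiliary: a function continuous from the right at `0` cannot have a derivative
`≥ c/t` (with `c > 0`) on `(0, δ)`. -/
lemma aux_log_blowup {δ : ℝ} (hδ : 0 < δ) {g g' : ℝ → ℝ} {c : ℝ} (hc : 0 < c)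
    (hcont : Filter.Tendsto g (𝓝[>] (0:ℝ)) (𝓝 (g 0)))
    (hderiv : ∀ t ∈ Set.Ioo (0:ℝ) δ, HasDerivAt g (g' t) t)
    (hge : ∀ t ∈ Set.Ioo (0:ℝ) δ, c / t ≤ g' t) : False := by
  set φ : ℝ → ℝ := fun t => g t - c * Real.log t with hφ
  have hφd : ∀ t ∈ Set.Ioo (0:ℝ) δ, HasDerivAt φ (g' t - c / t) t := by
    intro t ht
    have hlog : HasDerivAt (fun x => c * Real.log x) (c * t⁻¹) t :=
      (Real.hasDerivAt_log (ne_of_gt ht.1)).const_mul c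
    have := (hderiv t ht).sub hlog
    have e : g' t - c / t = g' t - c * t⁻¹ := by ring
    rw [e]; exact this
  have hmono : MonotoneOn φ (Set.Ioo 0 δ) := by
    apply monotoneOn_of_deriv_nonneg (convex_Ioo _ _)
    · exact fun t ht => (hφd t ht).continuousAt.continuousWithinAt
    · rw [interior_Ioo]
      exact fun t ht => (hφd t ht).differentiableAt.differentiableWithinAt
    · rw [interior_Ioo]
      intro t ht
      rw [(hφd t ht).deriv]
      exact sub_nonneg.2 (hge t ht)
  have ht₀ : δ/2 ∈ Set.Ioo (0:ℝ) δ := ⟨by positivity, by linarith⟩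
  have key : ∀ a ∈ Set.Ioo (0:ℝ) (δ/2), g a ≤ φ (δ/2) + c * Real.log a := by
    intro a ha
    have h1 : a ∈ Set.Ioo (0:ℝ) δ := ⟨ha.1, by linarith [ha.2]⟩
    have := hmono h1 ht₀ (le_of_lt ha.2)
    simp only [hφ] at this
    linarith
  have hlog : Tendsto (fun a => φ (δ/2) + c * Real.log a) (𝓝[>] (0:ℝ)) atBot := by
    apply tendsto_atBot_add_const_left
    exact (Real.tendsto_log_nhdsGT_zero).const_mul_atBot hc
  have h1 : ∀ᶠ a in 𝓝[>] (0:ℝ), g a ≤ g 0 - 1 := by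
    filter_upwards [Ioo_mem_nhdsGT (by positivity : (0:ℝ) < δ/2),
      hlog.eventually (eventually_le_atBot (g 0 - 1))] with a ha hb
    exact le_trans (key a ha) hb
  have h2 : ∀ᶠ a in 𝓝[>] (0:ℝ), g 0 - 1 < g a :=
    hcont.eventually (eventually_gt_nhds (by linarith))
  obtain ⟨a, ha1, ha2⟩ := (h1.and h2).exists
  linarith

/-- Appendix C: a bounded continuous solution of
`α'' + α'/s - λ α = F` on `(0, ε)` is `C²` up to `0`, with `α'(0) = 0` and
`α''(0) = (λ α(0) + F(0))/2`. -/
theorem degenerate_ode_C2 (ε : ℝ) (hε : 0 < ε) (lam : ℝ)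
    (F α : ℝ → ℝ)
    (hFcont : ContinuousOn F (Set.Ico 0 ε))
    (hFsmooth : ContDiffOn ℝ (⊤ : ℕ∞) F (Set.Ioo 0 ε))
    (hαcont : ContinuousOn α (Set.Ico 0 ε))
    (hαsmooth : ContDiffOn ℝ (⊤ : ℕ∞) α (Set.Ioo 0 ε))
    (hode : ∀ s ∈ Set.Ioo (0 : ℝ) ε,
      deriv (deriv α) s + deriv α s / s - lam * α s = F s) :
    ContDiffOn ℝ 2 α (Set.Ico 0 ε) ∧
    derivWithin α (Set.Ico 0 ε) 0 = 0 ∧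
    derivWithin (derivWithin α (Set.Ico 0 ε)) (Set.Ico 0 ε) 0 =
      (lam * α 0 + F 0) / 2 := by
  -- basic setup
  have hbε : ε/2 < ε := by linarith
  have hb0 : (0:ℝ) < ε/2 := by positivity
  set b : ℝ := ε/2 with hbdef
  set h : ℝ → ℝ := fun s => lam * α s + F s with hdef
  have hhcont : ContinuousOn h (Set.Ico 0 ε) :=
    (continuousOn_const.mul hαcont).add hFcont
  have h0mem : (0:ℝ) ∈ Set.Ico (0:ℝ) ε := ⟨le_refl _, hε⟩
  -- smoothness on the open interval
  have hd1 : ∀ x ∈ Set.Ioo (0:ℝ) ε, HasDerivAt α (deriv α x) x := by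
    intro x hx
    exact (((hαsmooth x hx).contDiffAt (isOpen_Ioo.mem_nhds hx)).differentiableAt (by simp)).hasDerivAt
  have hα2 : ContDiffOn ℝ (⊤ : ℕ∞) (deriv α) (Set.Ioo 0 ε) :=
    hαsmooth.deriv_of_isOpen isOpen_Ioo (by simp)
  have hd2 : ∀ x ∈ Set.Ioo (0:ℝ) ε, HasDerivAt (deriv α) (deriv (deriv α) x) x := by
    intro x hx
    exact (((hα2 x hx).contDiffAt (isOpen_Ioo.mem_nhds hx)).differentiableAt (by simp)).hasDerivAt
  have hdd_cont : ContinuousOn (deriv (deriv α)) (Set.Ioo 0 ε) :=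
    hα2.continuousOn_deriv_of_isOpen isOpen_Ioo (by simp)
  -- the ODE rearranged
  have hode' : ∀ x ∈ Set.Ioo (0:ℝ) ε, deriv (deriv α) x = h x - deriv α x / x := by
    intro x hx
    have := hode x hx
    simp only [hdef]
    linarith
  -- derivative of s * α'(s)
  have hG : ∀ x ∈ Set.Ioo (0:ℝ) ε,
      HasDerivAt (fun y => y * deriv α y) (x * h x) x := by
    intro x hx
    have hx0 : x ≠ 0 := ne_of_gt hx.1
    have key := (hasDerivAt_id x).mul (hd2 x hx)
    simp only [id_eq] at key
    have hc : x * (deriv α x / x) = deriv α x := by field_simp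
    have e : x * h x = 1 * deriv α x + x * deriv (deriv α) x := by
      rw [hode' x hx, mul_sub, hc]
      ring
    rw [e]; exact key
  -- integrability of t ↦ t * h t
  have hintcont : ContinuousOn (fun t => t * h t) (Set.Ico 0 ε) :=
    continuousOn_id.mul hhcont
  set P : ℝ → ℝ := fun x => ∫ t in (0:ℝ)..x, t * h t with hPdef
  have hPcont : ContinuousOn P (Set.Icc 0 b) := by
    have : Set.uIcc (0:ℝ) b = Set.Icc 0 b := Set.uIcc_of_le hb0.le
    rw [← this]
    apply intervalIntegral.continuousOn_primitive_interval
    rw [this]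
    exact (hintcont.mono (fun t ht => ⟨ht.1, lt_of_le_of_lt ht.2 hbε⟩)).integrableOn_Icc
  have hP0 : P 0 = 0 := intervalIntegral.integral_same
  have hPlim : Tendsto P (𝓝[>] (0:ℝ)) (𝓝 0) := by
    have h1 : Tendsto P (𝓝[Set.Icc 0 b] (0:ℝ)) (𝓝 0) := by
      have := hPcont 0 ⟨le_refl _, hb0.le⟩
      rw [ContinuousWithinAt, hP0] at this
      exact this
    apply h1.mono_left
    rw [← nhdsWithin_Ioc_eq_nhdsGT hb0]
    exact nhdsWithin_mono _ Set.Ioc_subset_Icc_self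
  -- key identity via FTC
  have hIoc_sub : ∀ s ∈ Set.Ioc (0:ℝ) b, ∀ x ∈ Set.Icc s b, x ∈ Set.Ioo (0:ℝ) ε := by
    intro s hs x hx
    exact ⟨lt_of_lt_of_le hs.1 hx.1, lt_of_le_of_lt hx.2 hbε⟩
  set C : ℝ := b * deriv α b - P b with hCdef
  have hkey : ∀ s ∈ Set.Ioc (0:ℝ) b, s * deriv α s = C + P s := by
    intro s hs
    have husub : Set.uIcc s b = Set.Icc s b := Set.uIcc_of_le hs.2
    have hintegr : IntervalIntegrable (fun t => t * h t) MeasureTheory.volume s b := by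
      apply ContinuousOn.intervalIntegrable
      rw [husub]
      exact hintcont.mono (fun x hx => by
        have := hIoc_sub s hs x hx
        exact ⟨this.1.le, this.2⟩)
    have hftc : ∫ t in s..b, t * h t = b * deriv α b - s * deriv α s := by
      have := intervalIntegral.integral_eq_sub_of_hasDerivAt
        (f := fun y => y * deriv α y) (f' := fun t => t * h t) (a := s) (b := b)
        (fun x hx => hG x (hIoc_sub s hs x (husub ▸ hx))) hintegr
      simpa using this
    have hint1 : IntervalIntegrable (fun t => t * h t) MeasureTheory.volume 0 b := by
      apply ContinuousOn.intervalIntegrable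
      rw [Set.uIcc_of_le hb0.le]
      exact hintcont.mono (fun x hx => ⟨hx.1, lt_of_le_of_lt hx.2 hbε⟩)
    have hint2 : IntervalIntegrable (fun t => t * h t) MeasureTheory.volume 0 s := by
      apply ContinuousOn.intervalIntegrable
      rw [Set.uIcc_of_le hs.1.le]
      exact hintcont.mono (fun x hx => ⟨hx.1, lt_of_le_of_lt hx.2 (lt_of_le_of_lt hs.2 hbε)⟩)
    have hsplit : P b - P s = ∫ t in s..b, t * h t :=
      intervalIntegral.integral_interval_sub_left hint1 hint2
    rw [hftc] at hsplit
    rw [hCdef]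
    linarith
  -- the limit of s α'(s) is C
  have hGlim : Tendsto (fun s => s * deriv α s) (𝓝[>] (0:ℝ)) (𝓝 C) := by
    have h1 : Tendsto (fun s => C + P s) (𝓝[>] (0:ℝ)) (𝓝 C) := by
      have := tendsto_const_nhds.add hPlim
        (f := fun _ : ℝ => C) (x := 𝓝[>] (0:ℝ))
      simpa using this
    apply h1.congr'
    filter_upwards [Ioc_mem_nhdsGT hb0] with s hs
    exact (hkey s hs).symm
  -- C = 0 via the blow-up lemma
  have hαIoi : Tendsto α (𝓝[>] (0:ℝ)) (𝓝 (α 0)) := by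
    have := hαcont 0 h0mem
    exact this.mono_of_mem_nhdsWithin (Ico_mem_nhdsGT hε)
  have hC0 : C = 0 := by
    by_contra hC
    have habs : ∀ᶠ t in 𝓝[>] (0:ℝ), |P t| < |C|/2 := by
      have : Tendsto (fun t => |P t|) (𝓝[>] (0:ℝ)) (𝓝 0) := by
        simpa using hPlim.abs
      exact this.eventually (eventually_lt_nhds (by positivity))
    obtain ⟨u, hu, hsub⟩ := mem_nhdsGT_iff_exists_Ioo_subset.1
      (habs.and (Ioc_mem_nhdsGT hb0))
    set δ := min u b with hδdef
    have hδ0 : 0 < δ := lt_min hu hb0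
    have hmem : ∀ t ∈ Set.Ioo (0:ℝ) δ, |P t| < |C|/2 ∧ t ∈ Set.Ioc (0:ℝ) b := by
      intro t ht
      exact hsub ⟨ht.1, lt_of_lt_of_le ht.2 (min_le_left _ _)⟩
    rcases lt_or_gt_of_ne hC with hneg | hpos
    · -- C < 0 : -α blows up
      apply aux_log_blowup hδ0 (g := fun t => -α t) (g' := fun t => -deriv α t)
        (c := -C/2) (by linarith)
      · exact (hαIoi.neg)
      · intro t ht
        exact ((hd1 t ⟨ht.1, lt_of_lt_of_le (lt_of_lt_of_le ht.2 (min_le_right _ _)) hbε.le⟩)).neg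
      · intro t ht
        obtain ⟨hPt, htb⟩ := hmem t ht
        have hkt := hkey t htb
        rw [abs_of_neg hneg] at hPt
        have habs2 : -(C/2) ≤ -C - P t := by
          cases abs_lt.1 hPt with
          | intro h1 h2 => linarith
        rw [div_le_iff₀ ht.1]
        have : -(t * deriv α t) = -C - P t := by linarith
        nlinarith [this]
    · -- C > 0 : α blows up
      apply aux_log_blowup hδ0 (g := α) (g' := deriv α) (c := C/2) (by linarith)
      · exact hαIoi
      · intro t ht
        exact hd1 t ⟨ht.1, lt_of_lt_of_le (lt_of_lt_of_le ht.2 (min_le_right _ _)) hbε.le⟩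
      · intro t ht
        obtain ⟨hPt, htb⟩ := hmem t ht
        have hkt := hkey t htb
        rw [abs_of_pos hpos] at hPt
        have habs2 : C/2 ≤ C + P t := by
          cases abs_lt.1 hPt with
          | intro h1 h2 => linarith
        rw [div_le_iff₀ ht.1]
        nlinarith
  -- α'(s) = P s / s on (0, b]
  have hd_eq : ∀ s ∈ Set.Ioc (0:ℝ) b, deriv α s = P s / s := by
    intro s hs
    rw [eq_div_iff (ne_of_gt hs.1)]
    have := hkey s hs
    rw [hC0, zero_add] at this
    linarith
  -- bound for |h| on [0, b]
  obtain ⟨M, hM⟩ := (isCompact_Icc (a := (0:ℝ)) (b := b)).exists_bound_of_continuousOn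
    (hhcont.mono (fun t ht => ⟨ht.1, lt_of_le_of_lt ht.2 hbε⟩))
  -- limit (i) : α' → 0 at 0⁺
  have hlim1 : Tendsto (deriv α) (𝓝[>] (0:ℝ)) (𝓝 0) := by
    apply squeeze_zero_norm' (a := fun s => M * s)
    · filter_upwards [Ioc_mem_nhdsGT hb0] with s hs
      have hPs : ‖P s‖ ≤ M * s * |s - 0| := by
        apply intervalIntegral.norm_integral_le_of_norm_le_const
        intro t ht
        rw [Set.uIoc_of_le hs.1.le] at ht
        have h2 : ‖h t‖ ≤ M := hM t ⟨ht.1.le, le_trans ht.2 hs.2⟩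
        rw [norm_mul, Real.norm_of_nonneg ht.1.le]
        nlinarith [norm_nonneg (h t), ht.1.le, ht.2]
      rw [hd_eq s hs, norm_div, Real.norm_of_nonneg hs.1.le, div_le_iff₀ hs.1]
      calc ‖P s‖ ≤ M * s * |s - 0| := hPs
        _ = M * s * s := by rw [sub_zero, abs_of_pos hs.1]
    · have h1 : Tendsto (fun s : ℝ => M * s) (𝓝 (0:ℝ)) (𝓝 (M * 0)) :=
        (continuous_const.mul continuous_id).tendsto 0
      simpa using h1.mono_left nhdsWithin_le_nhds
  -- limit (ii): α'(s)/s → h 0 / 2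
  have hh0 : Tendsto h (𝓝[>] (0:ℝ)) (𝓝 (h 0)) :=
    (hhcont 0 h0mem).mono_of_mem_nhdsWithin (Ico_mem_nhdsGT hε)
  have hlim2 : Tendsto (fun s => deriv α s / s) (𝓝[>] (0:ℝ)) (𝓝 (h 0 / 2)) := by
    rw [Metric.tendsto_nhdsWithin_nhds]
    intro η hη
    obtain ⟨δ₁, hδ₁, hδprop⟩ :=
      Metric.continuousWithinAt_iff.1 (hhcont 0 h0mem) (η/2) (by positivity)
    refine ⟨min δ₁ b, lt_min hδ₁ hb0, ?_⟩
    intro s hs hdist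
    have hs0 : (0:ℝ) < s := hs
    rw [Real.dist_eq, sub_zero, abs_of_pos hs0] at hdist
    have hsb : s ≤ b := le_of_lt (lt_of_lt_of_le hdist (min_le_right _ _))
    have hsδ : s < δ₁ := lt_of_lt_of_le hdist (min_le_left _ _)
    have hmem' : s ∈ Set.Ioc (0:ℝ) b := ⟨hs0, hsb⟩
    have hcont3 : ContinuousOn (fun t => t * (h t - h 0)) (Set.Icc (0:ℝ) s) := by
      apply ContinuousOn.mul continuousOn_id
      apply ContinuousOn.sub _ continuousOn_const
      exact hhcont.mono (fun t ht => ⟨ht.1, lt_of_le_of_lt ht.2 (lt_of_le_of_lt hsb hbε)⟩)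
    have hint3 : IntervalIntegrable (fun t => t * (h t - h 0)) MeasureTheory.volume 0 s := by
      apply ContinuousOn.intervalIntegrable
      rw [Set.uIcc_of_le hs0.le]
      exact hcont3
    have hint4 : IntervalIntegrable (fun t => t * h 0) MeasureTheory.volume 0 s :=
      (continuous_id.mul continuous_const).intervalIntegrable _ _
    have hPsplit : P s = (∫ t in (0:ℝ)..s, t * (h t - h 0)) + h 0 * (s^2/2) := by
      calc P s = ∫ t in (0:ℝ)..s, (t * (h t - h 0) + t * h 0) := by
            apply intervalIntegral.integral_congr
            intro t _
            ring
        _ = (∫ t in (0:ℝ)..s, t * (h t - h 0)) + ∫ t in (0:ℝ)..s, t * h 0 :=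
            intervalIntegral.integral_add hint3 hint4
        _ = (∫ t in (0:ℝ)..s, t * (h t - h 0)) + h 0 * (s^2/2) := by
            rw [intervalIntegral.integral_mul_const, integral_id]
            ring
    have hQ : ‖∫ t in (0:ℝ)..s, t * (h t - h 0)‖ ≤ (s * (η/2)) * |s - 0| := by
      apply intervalIntegral.norm_integral_le_of_norm_le_const
      intro t ht
      rw [Set.uIoc_of_le hs0.le] at ht
      have h1 : t ∈ Set.Ico (0:ℝ) ε :=
        ⟨ht.1.le, lt_of_le_of_lt (le_trans ht.2 hsb) hbε⟩
      have h2 : dist t 0 < δ₁ := by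
        rw [Real.dist_eq, sub_zero, abs_of_nonneg ht.1.le]
        exact lt_of_le_of_lt ht.2 hsδ
      have h3 := le_of_lt (hδprop h1 h2)
      rw [Real.dist_eq] at h3
      rw [norm_mul, Real.norm_of_nonneg ht.1.le, Real.norm_eq_abs]
      nlinarith [ht.1.le, ht.2, abs_nonneg (h t - h 0)]
    rw [Real.norm_eq_abs, sub_zero, abs_of_pos hs0] at hQ
    rw [Real.dist_eq, hd_eq s hmem', hPsplit]
    have hs2 : s ≠ 0 := ne_of_gt hs0
    have heq2 : ((∫ t in (0:ℝ)..s, t * (h t - h 0)) + h 0 * (s^2/2)) / s / s - h 0/2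
        = (∫ t in (0:ℝ)..s, t * (h t - h 0)) / s^2 := by
      field_simp
      ring
    rw [heq2, abs_div, abs_of_pos (by positivity : (0:ℝ) < s^2),
      div_lt_iff₀ (by positivity : (0:ℝ) < s^2)]
    nlinarith [hQ, mul_pos hη (pow_pos hs0 2),
      abs_nonneg (∫ t in (0:ℝ)..s, t * (h t - h 0))]
  -- derivative of α at 0 within
  have hIooIco : Set.Ioo (0:ℝ) ε ⊆ Set.Ico 0 ε := Set.Ioo_subset_Ico_self
  have hIoomem : Set.Ioo (0:ℝ) ε ∈ 𝓝[>] (0:ℝ) := Ioo_mem_nhdsGT hε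
  have hder0 : HasDerivWithinAt α 0 (Set.Ici 0) 0 := by
    apply hasDerivWithinAt_Ici_of_tendsto_deriv
    · exact fun x hx => ((hd1 x hx).differentiableAt).differentiableWithinAt
    · exact (hαcont 0 h0mem).mono hIooIco
    · exact hIoomem
    · exact hlim1
  have hder0' : HasDerivWithinAt α 0 (Set.Ico 0 ε) 0 := hder0.mono Set.Ico_subset_Ici_self
  have huniq : UniqueDiffOn ℝ (Set.Ico (0:ℝ) ε) := uniqueDiffOn_Ico 0 ε
  have hD0 : derivWithin α (Set.Ico 0 ε) 0 = 0 := hder0'.derivWithin (huniq 0 h0mem)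
  set D := derivWithin α (Set.Ico 0 ε) with hDdef
  have hDeq : ∀ s ∈ Set.Ioo (0:ℝ) ε, D s = deriv α s := fun s hs =>
    derivWithin_of_mem_nhds (mem_of_superset (isOpen_Ioo.mem_nhds hs) hIooIco)
  have hDd : ∀ s ∈ Set.Ioo (0:ℝ) ε, HasDerivAt D (deriv (deriv α) s) s := by
    intro s hs
    apply (hd2 s hs).congr_of_eventuallyEq
    filter_upwards [isOpen_Ioo.mem_nhds hs] with y hy
    exact hDeq y hy
  have hlim3 : Tendsto (deriv (deriv α)) (𝓝[>] (0:ℝ)) (𝓝 (h 0 / 2)) := by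
    have h1 : Tendsto (fun s => h s - deriv α s / s) (𝓝[>] (0:ℝ)) (𝓝 (h 0 - h 0/2)) :=
      hh0.sub hlim2
    have h2 : h 0 - h 0 / 2 = h 0 / 2 := by ring
    rw [h2] at h1
    apply h1.congr'
    filter_upwards [hIoomem] with s hs
    exact (hode' s hs).symm
  have hDtendsto : Tendsto D (𝓝[>] (0:ℝ)) (𝓝 0) := by
    apply hlim1.congr'
    filter_upwards [hIoomem] with s hs
    exact (hDeq s hs).symm
  have hder2 : HasDerivWithinAt D (h 0 / 2) (Set.Ici 0) 0 := by
    apply hasDerivWithinAt_Ici_of_tendsto_deriv (s := Set.Ioo 0 ε)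
    · exact fun x hx => (hDd x hx).differentiableAt.differentiableWithinAt
    · rw [ContinuousWithinAt, hD0]
      exact hDtendsto.mono_left (nhdsWithin_mono _ Set.Ioo_subset_Ioi_self)
    · exact hIoomem
    · apply hlim3.congr'
      filter_upwards [hIoomem] with s hs
      exact ((hDd s hs).deriv).symm
  have hder2' : HasDerivWithinAt D (h 0 / 2) (Set.Ico 0 ε) 0 := hder2.mono Set.Ico_subset_Ici_self
  have hE0 : derivWithin D (Set.Ico 0 ε) 0 = h 0 / 2 := hder2'.derivWithin (huniq 0 h0mem)
  have hEeq : ∀ s ∈ Set.Ioo (0:ℝ) ε, derivWithin D (Set.Ico 0 ε) s = deriv (deriv α) s := by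
    intro s hs
    rw [derivWithin_of_mem_nhds (mem_of_superset (isOpen_Ioo.mem_nhds hs) hIooIco)]
    exact (hDd s hs).deriv
  have hEcont : ContinuousOn (derivWithin D (Set.Ico 0 ε)) (Set.Ico 0 ε) := by
    intro s hs
    rcases eq_or_lt_of_le hs.1 with heq0 | hpos
    · have h00 : s = 0 := heq0.symm
      subst h00
      have hfilter : 𝓝[Set.Ico 0 ε] (0:ℝ) = pure 0 ⊔ 𝓝[Set.Ioo 0 ε] 0 := by
        rw [← Set.Ioo_insert_left hε, nhdsWithin_insert]
      rw [ContinuousWithinAt, hE0, hfilter, tendsto_sup]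
      constructor
      · simpa [hE0] using tendsto_pure_nhds (derivWithin D (Set.Ico 0 ε)) 0
      · have h1 : Tendsto (derivWithin D (Set.Ico 0 ε)) (𝓝[>] (0:ℝ)) (𝓝 (h 0 / 2)) := by
          apply hlim3.congr'
          filter_upwards [hIoomem] with y hy
          exact (hEeq y hy).symm
        exact h1.mono_left (nhdsWithin_mono _ Set.Ioo_subset_Ioi_self)
    · have hsIoo : s ∈ Set.Ioo (0:ℝ) ε := ⟨hpos, hs.2⟩
      have hca : ContinuousAt (deriv (deriv α)) s :=
        hdd_cont.continuousAt (isOpen_Ioo.mem_nhds hsIoo)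
      have : ContinuousAt (derivWithin D (Set.Ico 0 ε)) s := by
        apply hca.congr
        filter_upwards [isOpen_Ioo.mem_nhds hsIoo] with y hy
        exact (hEeq y hy).symm
      exact this.continuousWithinAt
  have hdiffα : DifferentiableOn ℝ α (Set.Ico 0 ε) := by
    intro s hs
    rcases eq_or_lt_of_le hs.1 with heq0 | hpos
    · have h00 : s = 0 := heq0.symm
      subst h00
      exact hder0'.differentiableWithinAt
    · exact ((hd1 s ⟨hpos, hs.2⟩).differentiableAt).differentiableWithinAt
  have hdiffD : DifferentiableOn ℝ D (Set.Ico 0 ε) := by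
    intro s hs
    rcases eq_or_lt_of_le hs.1 with heq0 | hpos
    · have h00 : s = 0 := heq0.symm
      subst h00
      exact hder2'.differentiableWithinAt
    · exact ((hDd s ⟨hpos, hs.2⟩).differentiableAt).differentiableWithinAt
  refine ⟨?_, hD0, ?_⟩
  · rw [show (2 : WithTop ℕ∞) = (1 : WithTop ℕ∞) + 1 by norm_num,
      contDiffOn_succ_iff_derivWithin huniq]
    refine ⟨hdiffα, by simp, ?_⟩
    rw [show (1 : WithTop ℕ∞) = (0 : WithTop ℕ∞) + 1 from rfl,
      contDiffOn_succ_iff_derivWithin huniq]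
    refine ⟨hdiffD, by simp, ?_⟩
    rw [contDiffOn_zero]
    exact hEcont
  · rw [hE0]
end

section
/- Let ε > 0 and λ ∈ ℝ. Suppose F : [0, ε) → ℝ is continuous, and α : [0, ε) → ℝ is continuous on [0, ε), twice continuously differentiable on (0, ε), and satisfies α''(s) + α'(s)/s − λ·α(s) = F(s) for all s ∈ (0, ε). Then for every s ∈ (0, ε), α'(s) = (λ/s)·∫₀^s t·α(t) dt + (1/s)·∫₀^s t·F(t) dt; in particular α'(s) → 0 as s → 0⁺. -/
open Set Filter Topology MeasureTheory intervalIntegral Real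

/-! On `(0, ε)` the equation reads `(s α'(s))' = G(s) := s (λ α(s) + F(s))`, so
`s α'(s) = C + ∫₀ˢ G`. As `G` is bounded near `0`, `α'(s) = C / s + O(1)`, hence
`α(s) = C log s + O(1)`, and the boundedness of `α` near `0` forces `C = 0`. Then
`α'(s) = (1/s) ∫₀ˢ G → G(0) = 0`. -/

theorem hasDerivAt_mul_of_degenerate_ode {u u' : ℝ → ℝ} {u'' lam f s : ℝ} (hs : s ≠ 0)
    (hu' : HasDerivAt u' u'' s) (hode : u'' + u' s / s - lam * u s = f) :
    HasDerivAt (fun t => t * u' t) (s * (lam * u s + f)) s := by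
  refine ((hasDerivAt_id' s).mul hu').congr_deriv ?_
  rw [← hode]
  field_simp
  ring

theorem exists_eq_add_integral_of_hasDerivAt {φ g : ℝ → ℝ} {a b : ℝ}
    (hφ : ∀ x ∈ Ioo a b, HasDerivAt φ (g x) x) (hg : ContinuousOn g (Ico a b)) :
    ∃ C, ∀ s ∈ Ioo a b, φ s = C + ∫ t in a..s, g t := by
  rcases (Ioo a b).eq_empty_or_nonempty with h | ⟨c, hc⟩
  · exact ⟨0, by simp [h]⟩
  have hint : ∀ s ∈ Ioo a b, IntervalIntegrable g volume a s := fun s hs =>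
    (hg.mono ((uIcc_of_le hs.1.le).trans_subset (Icc_subset_Ico_right hs.2))).intervalIntegrable
  refine ⟨φ c - ∫ t in a..c, g t, fun s hs => ?_⟩
  have hsc : uIcc s c ⊆ Ioo a b := ordConnected_Ioo.uIcc_subset hs hc
  have hftc : ∫ t in s..c, g t = φ c - φ s :=
    integral_eq_sub_of_hasDerivAt (fun x hx => hφ x (hsc hx))
      (hg.mono (hsc.trans Ioo_subset_Ico_self)).intervalIntegrable
  rw [← integral_add_adjacent_intervals (hint s hs) ((hint s hs).symm.trans (hint c hc)), hftc]
  ring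

theorem eq_zero_of_abs_mul_log_le {C c K : ℝ} (hc : 0 < c)
    (h : ∀ t ∈ Ioc 0 c, |C * log t| ≤ K) : C = 0 := by
  by_contra hC
  have hlim : Tendsto (fun t => |C * log t|) (𝓝[>] 0) atTop := by
    simp only [abs_mul]
    exact (tendsto_abs_atBot_atTop.comp tendsto_log_nhdsGT_zero).const_mul_atTop (abs_pos.2 hC)
  have hnear : ∀ᶠ t in 𝓝[>] 0, t ∈ Ioc 0 c := Ioc_mem_nhdsGT hc
  obtain ⟨t, ht, hKt⟩ := (hnear.and (hlim.eventually_gt_atTop K)).exists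
  exact (h t ht).not_gt hKt

theorem eq_zero_of_bounded_of_abs_mul_deriv_sub_le {f f' : ℝ → ℝ} {C c B M : ℝ} (hc : 0 < c)
    (hf : ∀ t ∈ Ioc 0 c, HasDerivAt f (f' t) t) (hB : ∀ t ∈ Ioc 0 c, |f t| ≤ B)
    (hM : ∀ t ∈ Ioc 0 c, |t * f' t - C| ≤ M * t) : C = 0 := by
  set k : ℝ → ℝ := fun t => f t - C * log t
  have hk : ∀ t ∈ Ioc 0 c, HasDerivWithinAt k (f' t - C * t⁻¹) (Ioc 0 c) t := fun t ht =>
    ((hf t ht).sub ((hasDerivAt_log ht.1.ne').const_mul C)).hasDerivWithinAt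
  have hk' : ∀ t ∈ Ioc 0 c, ‖f' t - C * t⁻¹‖ ≤ M := fun t ht => by
    have hdiv : f' t - C * t⁻¹ = (t * f' t - C) / t := by field_simp [ht.1.ne']
    rw [hdiv, norm_div, norm_eq_abs, norm_eq_abs, abs_of_pos ht.1, div_le_iff₀ ht.1]
    exact hM t ht
  have hc' : c ∈ Ioc 0 c := ⟨hc, le_rfl⟩
  refine eq_zero_of_abs_mul_log_le hc (K := B + |k c| + M * c) fun t ht => ?_
  have hlip := (convex_Ioc 0 c).norm_image_sub_le_of_norm_hasDerivWithin_le hk hk' hc' ht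
  have hM0 : 0 ≤ M := (norm_nonneg _).trans (hk' c hc')
  have htc : ‖t - c‖ ≤ c := by
    rw [norm_eq_abs, abs_of_nonpos (by linarith [ht.2])]; linarith [ht.1]
  calc |C * log t| = |f t - (k t - k c) - k c| := by simp only [k]; ring_nf
    _ ≤ |f t| + |k t - k c| + |k c| :=
        (abs_sub _ _).trans (add_le_add_left (abs_sub _ _) _)
    _ ≤ B + |k c| + M * c := by
        have := hlip.trans (mul_le_mul_of_nonneg_left htc hM0)
        rw [norm_eq_abs] at this
        linarith [hB t ht]

theorem eq_zero_of_mul_deriv_eq_add_integral {f f' g : ℝ → ℝ} {C c : ℝ} (hc : 0 < c)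
    (hf : ContinuousOn f (Icc 0 c)) (hg : ContinuousOn g (Icc 0 c))
    (hf' : ∀ t ∈ Ioc 0 c, HasDerivAt f (f' t) t)
    (heq : ∀ t ∈ Ioc 0 c, t * f' t = C + ∫ x in 0..t, g x) : C = 0 := by
  obtain ⟨B, hB⟩ := isCompact_Icc.exists_bound_of_continuousOn hf
  obtain ⟨M, hM⟩ := isCompact_Icc.exists_bound_of_continuousOn hg
  refine eq_zero_of_bounded_of_abs_mul_deriv_sub_le (M := M) hc hf'
    (fun t ht => hB t (Ioc_subset_Icc_self ht)) fun t ht => ?_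
  have hbound : ‖∫ x in 0..t, g x‖ ≤ M * |t - 0| :=
    intervalIntegral.norm_integral_le_of_norm_le_const fun x hx => by
      rw [uIoc_of_le ht.1.le] at hx
      exact hM x ⟨hx.1.le, hx.2.trans ht.2⟩
  rw [heq t ht, add_sub_cancel_left]
  simpa [abs_of_pos ht.1] using hbound

theorem tendsto_integral_div_nhdsGT {g : ℝ → ℝ} {b : ℝ} (hb : 0 < b)
    (hg : ContinuousOn g (Ico 0 b)) :
    Tendsto (fun s => (∫ t in 0..s, g t) / s) (𝓝[>] 0) (𝓝 (g 0)) := by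
  have hmeas : StronglyMeasurableAtFilter g (𝓝[>] 0) := by
    rw [← nhdsWithin_Ioo_eq_nhdsGT hb]
    exact (hg.mono Ioo_subset_Ico_self).stronglyMeasurableAtFilter_nhdsWithin
      measurableSet_Ioo 0
  have hderiv : HasDerivWithinAt (fun u => ∫ t in 0..u, g t) (g 0) (Ici 0) 0 :=
    integral_hasDerivWithinAt_right (by simp) hmeas <|
      ((hg 0 ⟨le_rfl, hb⟩).mono_of_mem_nhdsWithin (Ico_mem_nhdsGE hb)).mono Ioi_subset_Ici_self
  rw [hasDerivWithinAt_iff_tendsto_slope, Ici_sdiff_left] at hderiv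
  refine hderiv.congr fun s => ?_
  simp [slope_def_field, div_eq_inv_mul]

theorem integral_mul_const_mul_add {u v : ℝ → ℝ} {lam a b : ℝ}
    (hu : ContinuousOn u (uIcc a b)) (hv : ContinuousOn v (uIcc a b)) :
    ∫ t in a..b, t * (lam * u t + v t) =
      lam * (∫ t in a..b, t * u t) + ∫ t in a..b, t * v t := by
  have hint : ∀ w : ℝ → ℝ, ContinuousOn w (uIcc a b) →
      IntervalIntegrable (fun t => t * w t) volume a b := fun w hw =>
    (continuousOn_id.mul hw).intervalIntegrable
  rw [← intervalIntegral.integral_const_mul,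
    ← integral_add ((hint u hu).const_mul lam) (hint v hv)]
  exact integral_congr fun t _ => by ring

/-- Appendix C: integral representation of `α'` for solutions of
the degenerate ODE `α'' + α'/s - λ α = F`; in particular `α'(s) → 0` as
`s → 0⁺`. -/
theorem degenerate_ode_deriv_formula (ε : ℝ) (hε : 0 < ε) (lam : ℝ)
    (F α : ℝ → ℝ)
    (hFcont : ContinuousOn F (Set.Ico 0 ε))
    (hαcont : ContinuousOn α (Set.Ico 0 ε))
    (hαC2 : ContDiffOn ℝ 2 α (Set.Ioo 0 ε))
    (hode : ∀ s ∈ Set.Ioo (0 : ℝ) ε,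
      deriv (deriv α) s + deriv α s / s - lam * α s = F s) :
    (∀ s ∈ Set.Ioo (0 : ℝ) ε,
      deriv α s = (lam / s) * (∫ t in (0 : ℝ)..s, t * α t)
        + (1 / s) * (∫ t in (0 : ℝ)..s, t * F t)) ∧
    Filter.Tendsto (deriv α) (nhdsWithin 0 (Set.Ioo 0 ε)) (nhds 0) := by
  set G : ℝ → ℝ := fun t => t * (lam * α t + F t)
  have hGcont : ContinuousOn G (Ico 0 ε) :=
    continuousOn_id.mul ((continuousOn_const.mul hαcont).add hFcont)
  have hα' : ∀ s ∈ Ioo 0 ε, HasDerivAt α (deriv α s) s := fun s hs =>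
    ((hαC2.differentiableOn two_ne_zero).differentiableAt (isOpen_Ioo.mem_nhds hs)).hasDerivAt
  have hα'' : ∀ s ∈ Ioo 0 ε, HasDerivAt (deriv α) (deriv (deriv α) s) s := fun s hs =>
    (((hαC2.deriv_of_isOpen isOpen_Ioo le_rfl).differentiableOn one_ne_zero).differentiableAt
      (isOpen_Ioo.mem_nhds hs)).hasDerivAt
  obtain ⟨C, hC⟩ := exists_eq_add_integral_of_hasDerivAt (fun s hs =>
    hasDerivAt_mul_of_degenerate_ode hs.1.ne' (hα'' s hs) (hode s hs)) hGcont
  have hC0 : C = 0 := by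
    have hIcc : Icc 0 (ε / 2) ⊆ Ico 0 ε := Icc_subset_Ico_right (half_lt_self hε)
    have hIoc : Ioc 0 (ε / 2) ⊆ Ioo 0 ε := Ioc_subset_Ioo_right (half_lt_self hε)
    exact eq_zero_of_mul_deriv_eq_add_integral (half_pos hε) (hαcont.mono hIcc)
      (hGcont.mono hIcc) (fun t ht => hα' t (hIoc ht)) (fun t ht => hC t (hIoc ht))
  have hform : ∀ s ∈ Ioo 0 ε, deriv α s = (∫ t in 0..s, G t) / s := fun s hs => by
    rw [eq_div_iff hs.1.ne', mul_comm, hC s hs, hC0, zero_add]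
  refine ⟨fun s hs => ?_, ?_⟩
  · have hIcc : uIcc 0 s ⊆ Ico 0 ε :=
      (uIcc_of_le hs.1.le).trans_subset (Icc_subset_Ico_right hs.2)
    rw [hform s hs, integral_mul_const_mul_add (hαcont.mono hIcc) (hFcont.mono hIcc)]
    ring
  · rw [nhdsWithin_Ioo_eq_nhdsGT hε]
    have hlim := tendsto_integral_div_nhdsGT hε hGcont
    rw [show G 0 = 0 from zero_mul _] at hlim
    exact hlim.congr' (eventuallyEq_of_mem (Ioo_mem_nhdsGT hε) fun s hs => (hform s hs).symm)
end

section
/- Let c > 0 and u* > 0, and let V : [0, u*] → ℝ be a positive C² function satisfying 2·V''(u) = c/V(u)² − 2·V(u) for all u ∈ [0, u*], with V'(0) = V'(u*) = 0 and V'(u) > 0 for all u ∈ (0, u*). Then V(0) < (c/2)^{1/3} < V(u*). -/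
/-!
The Hamiltonian `H(x, y) = y² + c/x + x²` is conserved along solutions of `2V'' = c/V² − 2V`.
At the two endpoints `V' = 0`, so `x = V 0 < y = V u*` satisfy `c/x + x² = c/y + y²`, which
factors as `c = x y (x + y)`; this lies strictly between `2x³` and `2y³`, and taking cube roots
gives `x < (c/2)^{1/3} < y`.
-/

open Set

noncomputable def hamiltonian (c x y : ℝ) : ℝ := y ^ 2 + c / x + x ^ 2

lemma hasDerivWithinAt_hamiltonian_eq_zero {c u w : ℝ} {s : Set ℝ} {V W : ℝ → ℝ}
    (hV : HasDerivWithinAt V (W u) s u) (hW : HasDerivWithinAt W w s u) (hVu : V u ≠ 0)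
    (hode : 2 * w = c / V u ^ 2 - 2 * V u) :
    HasDerivWithinAt (fun t => hamiltonian c (V t) (W t)) 0 s u := by
  have hH : HasDerivWithinAt (fun t => hamiltonian c (V t) (W t))
      (2 * W u * w + c * (-W u / V u ^ 2) + 2 * V u * W u) s u := by
    simpa [hamiltonian, div_eq_mul_inv] using
      ((hW.fun_pow 2).fun_add ((hV.inv hVu).const_mul c)).fun_add (hV.fun_pow 2)
  refine hH.congr_deriv ?_
  field_simp at hode ⊢
  linear_combination W u * hode

lemma hamiltonian_eq_of_ode {c a b : ℝ} (hab : a < b) {V : ℝ → ℝ}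
    (hV : ∀ u ∈ Icc a b, V u ≠ 0) (hC2 : ContDiffOn ℝ 2 V (Icc a b))
    (hode : ∀ u ∈ Icc a b,
      2 * derivWithin (derivWithin V (Icc a b)) (Icc a b) u = c / V u ^ 2 - 2 * V u) :
    ∀ u ∈ Icc a b, hamiltonian c (V u) (derivWithin V (Icc a b) u) =
      hamiltonian c (V a) (derivWithin V (Icc a b) a) := by
  have hunique : UniqueDiffOn ℝ (Icc a b) := uniqueDiffOn_Icc hab
  have hVdiff : DifferentiableOn ℝ V (Icc a b) := hC2.differentiableOn (by norm_num)
  have hWdiff : DifferentiableOn ℝ (derivWithin V (Icc a b)) (Icc a b) :=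
    (hC2.derivWithin hunique (by norm_num)).differentiableOn one_ne_zero
  have hderiv (u : ℝ) (hu : u ∈ Icc a b) :
      HasDerivWithinAt (fun t => hamiltonian c (V t) (derivWithin V (Icc a b) t)) 0
        (Icc a b) u :=
    hasDerivWithinAt_hamiltonian_eq_zero (hVdiff u hu).hasDerivWithinAt
      (hWdiff u hu).hasDerivWithinAt (hV u hu) (hode u hu)
  refine constant_of_derivWithin_zero (fun u hu => (hderiv u hu).differentiableWithinAt) ?_
  intro u hu
  exact (hderiv u (Ico_subset_Icc_self hu)).derivWithin (hunique u (Ico_subset_Icc_self hu))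

lemma strictMonoOn_Icc_of_derivWithin_pos {f : ℝ → ℝ} {a b : ℝ} (hf : ContinuousOn f (Icc a b))
    (hf' : ∀ u ∈ Ioo a b, 0 < derivWithin f (Icc a b) u) : StrictMonoOn f (Icc a b) := by
  refine strictMonoOn_of_deriv_pos (convex_Icc a b) hf fun u hu => ?_
  rw [interior_Icc] at hu
  rw [← derivWithin_of_mem_nhds (Icc_mem_nhds hu.1 hu.2)]
  exact hf' u hu

lemma pow_three_lt_half_lt_pow_three {c x y : ℝ} (hx : 0 < x) (hxy : x < y)
    (h : c / x + x ^ 2 = c / y + y ^ 2) : x ^ 3 < c / 2 ∧ c / 2 < y ^ 3 := by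
  have hy : 0 < y := hx.trans hxy
  have hc : c = x * y * (x + y) := by
    field_simp at h
    have : (y - x) * (c - x * y * (x + y)) = 0 := by linear_combination h
    linarith [(mul_eq_zero.1 this).resolve_left (sub_pos.2 hxy).ne']
  subst hc
  constructor <;> nlinarith [mul_pos hx hy, mul_pos (mul_pos hx hy) (sub_pos.2 hxy)]

lemma lt_rpow_one_third_iff {x a : ℝ} (hx : 0 ≤ x) (ha : 0 ≤ a) :
    x < a ^ ((1 : ℝ) / 3) ↔ x ^ 3 < a := by
  rw [one_div, Real.lt_rpow_inv_iff_of_pos hx ha (by norm_num)]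
  norm_cast

lemma rpow_one_third_lt_iff {x a : ℝ} (hx : 0 ≤ x) (ha : 0 ≤ a) :
    a ^ ((1 : ℝ) / 3) < x ↔ a < x ^ 3 := by
  rw [one_div, Real.rpow_inv_lt_iff_of_pos ha hx (by norm_num)]
  norm_cast

theorem solution_straddles_equilibrium_general (c u_star : ℝ)
    (hu : 0 < u_star) (V : ℝ → ℝ)
    (hpos : ∀ u ∈ Set.Icc (0 : ℝ) u_star, 0 < V u)
    (hC2 : ContDiffOn ℝ 2 V (Set.Icc 0 u_star))
    (hode : ∀ u ∈ Set.Icc (0 : ℝ) u_star,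
      2 * derivWithin (derivWithin V (Set.Icc 0 u_star)) (Set.Icc 0 u_star) u =
        c / V u ^ 2 - 2 * V u)
    (h0 : derivWithin V (Set.Icc 0 u_star) 0 = 0)
    (h1 : derivWithin V (Set.Icc 0 u_star) u_star = 0)
    (hincr : ∀ u ∈ Set.Ioo (0 : ℝ) u_star,
      0 < derivWithin V (Set.Icc 0 u_star) u) :
    V 0 < (c / 2) ^ ((1 : ℝ) / 3) ∧ (c / 2) ^ ((1 : ℝ) / 3) < V u_star := by
  have hmem0 : (0 : ℝ) ∈ Icc 0 u_star := left_mem_Icc.2 hu.le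
  have hmem1 : u_star ∈ Icc 0 u_star := right_mem_Icc.2 hu.le
  have hlt : V 0 < V u_star :=
    strictMonoOn_Icc_of_derivWithin_pos hC2.continuousOn hincr hmem0 hmem1 hu
  have hH := hamiltonian_eq_of_ode hu (fun u hu => (hpos u hu).ne') hC2 hode u_star hmem1
  rw [h0, h1] at hH
  simp only [hamiltonian, zero_pow two_ne_zero, zero_add] at hH
  obtain ⟨hlow, hhigh⟩ := pow_three_lt_half_lt_pow_three (hpos 0 hmem0) hlt hH.symm
  have hc : 0 ≤ c / 2 := (pow_pos (hpos 0 hmem0) 3).le.trans hlow.le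
  exact ⟨(lt_rpow_one_third_iff (hpos 0 hmem0).le hc).2 hlow,
    (rpow_one_third_lt_iff (hpos u_star hmem1).le hc).2 hhigh⟩

/-- Appendix B: a positive increasing solution of
`2V'' = c/V² - 2V` on `[0, u*]` with `V'(0) = V'(u*) = 0` straddles the
equilibrium `(c/2)^{1/3}`. -/
theorem solution_straddles_equilibrium (c u_star : ℝ) (hc : 0 < c)
    (hu : 0 < u_star) (V : ℝ → ℝ)
    (hpos : ∀ u ∈ Set.Icc (0 : ℝ) u_star, 0 < V u)
    (hC2 : ContDiffOn ℝ 2 V (Set.Icc 0 u_star))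
    (hode : ∀ u ∈ Set.Icc (0 : ℝ) u_star,
      2 * derivWithin (derivWithin V (Set.Icc 0 u_star)) (Set.Icc 0 u_star) u =
        c / V u ^ 2 - 2 * V u)
    (h0 : derivWithin V (Set.Icc 0 u_star) 0 = 0)
    (h1 : derivWithin V (Set.Icc 0 u_star) u_star = 0)
    (hincr : ∀ u ∈ Set.Ioo (0 : ℝ) u_star,
      0 < derivWithin V (Set.Icc 0 u_star) u) :
    V 0 < (c / 2) ^ ((1 : ℝ) / 3) ∧ (c / 2) ^ ((1 : ℝ) / 3) < V u_star :=
  solution_straddles_equilibrium_general c u_star hu V hpos hC2 hode h0 h1 hincr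
end

section
/- Let c > 0 and u* > 0. There is no positive C² function V : [0, u*] → ℝ satisfying: (i) 2·V''(u) = c/V(u)² − 2·V(u) for all u ∈ [0, u*]; (ii) V'(0) = V'(u*) = 0 and V'(u) > 0 for all u ∈ (0, u*); and (iii) 2·V''(0) = ( V(u*) − c/(2·V(u*)²) ) − ( V(0) − c/(2·V(0)²) ). -/
/-- Appendix B: there is no positive increasing solution of
`2V'' = c/V² - 2V` on `[0, u*]` with `V'(0) = V'(u*) = 0` satisfying the
Gauss–Bonnet identity `2V''(0) = [V - c/(2V²)]₀^{u*}`. -/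
theorem no_gauss_bonnet_solution (c u_star : ℝ) (hc : 0 < c)
    (hu : 0 < u_star) (V : ℝ → ℝ)
    (hpos : ∀ u ∈ Set.Icc (0 : ℝ) u_star, 0 < V u)
    (hC2 : ContDiffOn ℝ 2 V (Set.Icc 0 u_star))
    (hode : ∀ u ∈ Set.Icc (0 : ℝ) u_star,
      2 * derivWithin (derivWithin V (Set.Icc 0 u_star)) (Set.Icc 0 u_star) u =
        c / V u ^ 2 - 2 * V u)
    (h0 : derivWithin V (Set.Icc 0 u_star) 0 = 0)
    (h1 : derivWithin V (Set.Icc 0 u_star) u_star = 0)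
    (hincr : ∀ u ∈ Set.Ioo (0 : ℝ) u_star,
      0 < derivWithin V (Set.Icc 0 u_star) u)
    (hGB : 2 * derivWithin (derivWithin V (Set.Icc 0 u_star))
        (Set.Icc 0 u_star) 0 =
      (V u_star - c / (2 * V u_star ^ 2)) - (V 0 - c / (2 * V 0 ^ 2))) :
    False := by
  set S := Set.Icc (0 : ℝ) u_star with hS
  set V' := derivWithin V S with hV'
  set V'' := derivWithin V' S with hV''
  have hUD : UniqueDiffOn ℝ S := uniqueDiffOn_Icc hu
  have hdiffV : DifferentiableOn ℝ V S := hC2.differentiableOn (by norm_num)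
  have hC1' : ContDiffOn ℝ 1 V' S := hC2.derivWithin hUD (le_refl 2)
  have hdiffV' : DifferentiableOn ℝ V' S := hC1'.differentiableOn (by norm_num)
  have h0S : (0 : ℝ) ∈ S := Set.left_mem_Icc.mpr hu.le
  have h1S : u_star ∈ S := Set.right_mem_Icc.mpr hu.le
  have ha : 0 < V 0 := hpos 0 h0S
  have hb : 0 < V u_star := hpos u_star h1S
  -- V is strictly increasing, so V 0 < V u_star
  have hmono : StrictMonoOn V S := by
    apply strictMonoOn_of_hasDerivWithinAt_pos (convex_Icc 0 u_star)
      hdiffV.continuousOn (f' := V')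
    · intro x hx
      rw [interior_Icc] at hx
      exact ((hdiffV x (Set.Ioo_subset_Icc_self hx)).hasDerivWithinAt).mono
        (by rw [interior_Icc]; exact Set.Ioo_subset_Icc_self)
    · intro x hx
      rw [interior_Icc] at hx
      exact hincr x hx
  have hab : V 0 < V u_star := hmono h0S h1S hu
  -- the energy E = V'^2 + c/V + V^2 is constant
  set E : ℝ → ℝ := fun u => (V' u) ^ 2 + c / V u + (V u) ^ 2 with hE
  have hEdiff : DifferentiableOn ℝ E S := by
    apply DifferentiableOn.add
    apply DifferentiableOn.add
    · exact (hdiffV'.pow 2)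
    · exact (differentiableOn_const c).div hdiffV (fun x hx => (hpos x hx).ne')
    · exact hdiffV.pow 2
  have hEderiv : ∀ x ∈ S, derivWithin E S x = 0 := by
    intro x hx
    have hVx : HasDerivWithinAt V (V' x) S x := (hdiffV x hx).hasDerivWithinAt
    have hV'x : HasDerivWithinAt V' (V'' x) S x := (hdiffV' x hx).hasDerivWithinAt
    have hVne : V x ≠ 0 := (hpos x hx).ne'
    have hD : HasDerivWithinAt E
        (2 * V' x ^ 1 * V'' x + (0 * V x - c * V' x) / V x ^ 2
          + 2 * V x ^ 1 * V' x) S x := by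
      exact ((hV'x.pow 2).add
        ((hasDerivWithinAt_const x S c).div hVx hVne)).add (hVx.pow 2)
    have hval := hode x hx
    have : 2 * V' x ^ 1 * V'' x + (0 * V x - c * V' x) / V x ^ 2
        + 2 * V x ^ 1 * V' x = 0 := by
      have hV''x : V'' x = c / (2 * V x ^ 2) - V x := by
        rw [hV'', hV', hS]
        field_simp at hval ⊢
        linarith
      rw [hV''x]
      field_simp
      ring
    rw [hD.derivWithin (hUD x hx), this]
  have hEconst := constant_of_derivWithin_zero hEdiff
    (fun x hx => hEderiv x (Set.Ico_subset_Icc_self hx))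
  have hE01 : E u_star = E 0 := hEconst u_star h1S
  have hEex : (V u_star) ^ 2 + c / V u_star = (V 0) ^ 2 + c / V 0 := by
    have := hE01
    rw [hE] at this
    simp only [h0, h1] at this
    linarith
  -- turn hGB into algebra using the ODE at 0
  have hode0 := hode 0 h0S
  rw [hGB] at hode0
  -- clear denominators and derive contradiction
  set a := V 0
  set b := V u_star
  have hEnergy : c * (b - a) = a * b * (b - a) * (a + b) := by
    have h1' : c / b - c / a = a ^ 2 - b ^ 2 := by linarith
    field_simp at h1'
    nlinarith [h1']
  have hba : b - a ≠ 0 := sub_ne_zero.mpr hab.ne'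
  have hcab : c = a * b * (a + b) :=
    mul_right_cancel₀ hba (by rw [hEnergy]; ring)
  have hsplit : c / a ^ 2 = c / (2 * a ^ 2) + c / (2 * a ^ 2) := by
    field_simp; ring
  have hGB' : c / (2 * a ^ 2) + c / (2 * b ^ 2) = a + b := by
    have h := hode0.symm
    linarith
  rw [hcab] at hGB'
  have ha0 : a ≠ 0 := ha.ne'
  have hb0 : b ≠ 0 := hb.ne'
  field_simp at hGB'
  have hprod : 0 < a * b * (a + b) * (b - a) ^ 2 := by positivity
  nlinarith [hGB', hprod]
end

section
/- Let 0 < m < 1/(3√3), and let x, y be real numbers with 0 < x < 1/√3 < y < 1 satisfying x³ − x + 2m = 0 and y³ − y + 2m = 0. Then (1 − 3x²)/(2x) > (3y² − 1)/(2y). -/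
/-- the surface gravity at the black-hole horizon exceeds the
one at the cosmological horizon of a Schwarzschild–de Sitter space. -/
theorem surface_gravity_comparison (m x y : ℝ)
    (hm : 0 < m) (hm' : m < 1 / (3 * Real.sqrt 3))
    (hx : 0 < x) (hx' : x < 1 / Real.sqrt 3)
    (hy : 1 / Real.sqrt 3 < y) (hy' : y < 1)
    (hrootx : x ^ 3 - x + 2 * m = 0)
    (hrooty : y ^ 3 - y + 2 * m = 0) :
    (1 - 3 * x ^ 2) / (2 * x) > (3 * y ^ 2 - 1) / (2 * y) := by
  have hxy : x < y := lt_trans hx' hy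
  have hy0 : 0 < y := lt_trans hx hxy
  have hsum : x ^ 2 + x * y + y ^ 2 = 1 := by
    have h : (x - y) * (x ^ 2 + x * y + y ^ 2 - 1) = 0 := by nlinarith [hrootx, hrooty]
    have hne : x - y ≠ 0 := by linarith
    have := (mul_eq_zero.mp h).resolve_left hne
    linarith
  rw [gt_iff_lt, div_lt_div_iff₀ (by linarith) (by linarith)]
  nlinarith [sq_nonneg (x - y), mul_pos hx hy0, mul_pos (mul_pos hx hy0) (add_pos hx hy0)]
end

section
/- For 0 < m < 1/(3√3), let r_h(m) < r_c(m) denote the two positive roots of r³ − r + 2m = 0 (so 0 < r_h(m) < 1/√3 < r_c(m) < 1), and set k₁(m) = (1 − 3 r_h(m)²)/(2 r_h(m)), k₂(m) = (3 r_c(m)² − 1)/(2 r_c(m)), and G(m) = ( k₁(m)·4π r_h(m)² + k₂(m)·4π r_c(m)² ) / ( k₁(m) + k₂(m) ). Then G is strictly increasing on (0, 1/(3√3)); moreover G(m) → 0 as m → 0⁺ and G(m) → 4π/3 as m → (1/(3√3))⁻. -/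
set_option maxHeartbeats 1600000 in
/-- the weighted boundary-area average
`G(m) = (k₁ |∂₁M| + k₂ |∂₂M|)/(k₁ + k₂)` of the Schwarzschild–de Sitter space
of mass `m` is strictly increasing in `m ∈ (0, 1/(3√3))`, tends to `0` as
`m → 0⁺` and to `4π/3` as `m → (1/(3√3))⁻`. -/
theorem weighted_area_average_increasing (r_h r_c : ℝ → ℝ)
    (hroots : ∀ m ∈ Set.Ioo (0 : ℝ) (1 / (3 * Real.sqrt 3)),
      0 < r_h m ∧ r_h m < 1 / Real.sqrt 3 ∧
      1 / Real.sqrt 3 < r_c m ∧ r_c m < 1 ∧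
      (r_h m) ^ 3 - r_h m + 2 * m = 0 ∧ (r_c m) ^ 3 - r_c m + 2 * m = 0)
    (k₁ k₂ G : ℝ → ℝ)
    (hk₁ : ∀ m, k₁ m = (1 - 3 * (r_h m) ^ 2) / (2 * r_h m))
    (hk₂ : ∀ m, k₂ m = (3 * (r_c m) ^ 2 - 1) / (2 * r_c m))
    (hG : ∀ m, G m =
      (k₁ m * (4 * Real.pi * (r_h m) ^ 2) + k₂ m * (4 * Real.pi * (r_c m) ^ 2))
        / (k₁ m + k₂ m)) :
    StrictMonoOn G (Set.Ioo 0 (1 / (3 * Real.sqrt 3))) ∧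
    Filter.Tendsto G (nhdsWithin 0 (Set.Ioo 0 (1 / (3 * Real.sqrt 3))))
      (nhds 0) ∧
    Filter.Tendsto G
      (nhdsWithin (1 / (3 * Real.sqrt 3)) (Set.Ioo 0 (1 / (3 * Real.sqrt 3))))
      (nhds (4 * Real.pi / 3)) := by
  have h3 : (0:ℝ) < Real.sqrt 3 := Real.sqrt_pos.mpr (by norm_num)
  have h3sq : Real.sqrt 3 ^ 2 = 3 := Real.sq_sqrt (by norm_num)
  set M : ℝ := 1 / (3 * Real.sqrt 3) with hM
  have hMpos : 0 < M := by positivity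
  have hMsq : M ^ 2 = 1 / 27 := by
    rw [hM, div_pow, mul_pow, h3sq]; norm_num
  have hpi : (0:ℝ) < Real.pi := Real.pi_pos
  -- key per-point facts
  have key : ∀ m ∈ Set.Ioo (0:ℝ) M,
      0 < r_h m * r_c m ∧ 4 * m ^ 2 = (r_h m * r_c m) ^ 2 * (1 + r_h m * r_c m) ∧
      r_h m * r_c m < 1 / 3 ∧
      G m = 8 * Real.pi * (r_h m * r_c m) / (1 + 3 * (r_h m * r_c m)) := by
    intro m hm
    obtain ⟨ha, hab, hbb, hb1, ha3, hb3⟩ := hroots m hm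
    set a := r_h m with hadef
    set b := r_c m with hbdef
    have hb : 0 < b := lt_trans (by positivity) hbb
    have hpos : 0 < a * b := mul_pos ha hb
    have habl : a < b := lt_trans hab hbb
    have hsum : a ^ 2 + a * b + b ^ 2 = 1 := by
      have hfac : (a - b) * (a ^ 2 + a * b + b ^ 2 - 1) = 0 := by
        linear_combination ha3 - hb3
      rcases mul_eq_zero.mp hfac with h | h
      · exact absurd (sub_eq_zero.mp h) (ne_of_lt habl)
      · linarith
    have key1 : 2 * m = a * b * (a + b) := by
      linear_combination ha3 - a * hsum
    have key2 : 4 * m ^ 2 = (a * b) ^ 2 * (1 + a * b) := by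
      linear_combination (2 * m + a * b * (a + b)) * key1 + (a * b) ^ 2 * hsum
    have hm2 : m ^ 2 < 1 / 27 := by
      rw [← hMsq]
      exact pow_lt_pow_left₀ hm.2 (le_of_lt hm.1) (by norm_num)
    have hlt3 : a * b < 1 / 3 := by nlinarith [hpos, key2]
    refine ⟨hpos, key2, hlt3, ?_⟩
    have hane : a ≠ 0 := ne_of_gt ha
    have hbne : b ≠ 0 := ne_of_gt hb
    have hnum : (1 - 3 * a ^ 2) / (2 * a) * (4 * Real.pi * a ^ 2)
        + (3 * b ^ 2 - 1) / (2 * b) * (4 * Real.pi * b ^ 2)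
        = 4 * Real.pi * (b - a) := by
      have e : (1 - 3 * a ^ 2) / (2 * a) * (4 * Real.pi * a ^ 2)
          + (3 * b ^ 2 - 1) / (2 * b) * (4 * Real.pi * b ^ 2)
          = 2 * Real.pi * (a * (1 - 3 * a ^ 2) + b * (3 * b ^ 2 - 1)) := by
        field_simp; ring
      rw [e]; linear_combination (6 * Real.pi * (b - a)) * hsum
    have hden : (1 - 3 * a ^ 2) / (2 * a) + (3 * b ^ 2 - 1) / (2 * b)
        = (b - a) * (1 + 3 * (a * b)) / (2 * (a * b)) := by
      field_simp; ring
    rw [hG, hk₁, hk₂, ← hadef, ← hbdef, hnum, hden]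
    have hba : (0:ℝ) < b - a := by linarith
    have h13 : (0:ℝ) < 1 + 3 * (a * b) := by nlinarith
    field_simp
    ring
  refine ⟨?_, ?_, ?_⟩
  · -- strict monotonicity
    intro x hx y hy hxy
    obtain ⟨px, ex, lx, gx⟩ := key x hx
    obtain ⟨py, ey, ly, gy⟩ := key y hy
    have ex' : 4 * x ^ 2 = (r_h x * r_c x) ^ 2 + (r_h x * r_c x) ^ 3 := by
      linear_combination ex
    have ey' : 4 * y ^ 2 = (r_h y * r_c y) ^ 2 + (r_h y * r_c y) ^ 3 := by
      linear_combination ey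
    have h1 : 4 * x ^ 2 < 4 * y ^ 2 := by nlinarith [hx.1, hxy]
    have hpq : r_h x * r_c x < r_h y * r_c y := by
      by_contra h
      push_neg at h
      have hq2 := pow_le_pow_left₀ (le_of_lt py) h 2
      have hq3 := pow_le_pow_left₀ (le_of_lt py) h 3
      linarith
    have d1 : (0:ℝ) < 1 + 3 * (r_h x * r_c x) := by nlinarith
    have d2 : (0:ℝ) < 1 + 3 * (r_h y * r_c y) := by nlinarith
    rw [gx, gy, div_lt_div_iff₀ d1 d2]
    nlinarith [mul_pos hpi (sub_pos.mpr hpq)]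
  · -- limit at 0
    apply tendsto_of_tendsto_of_tendsto_of_le_of_le'
      (tendsto_const_nhds : Filter.Tendsto (fun _ : ℝ => (0:ℝ)) _ _)
      (show Filter.Tendsto (fun m : ℝ => 16 * Real.pi * m)
          (nhdsWithin 0 (Set.Ioo 0 M)) (nhds 0) by
        have : Filter.Tendsto (fun m : ℝ => 16 * Real.pi * m) (nhds 0)
            (nhds (16 * Real.pi * 0)) :=
          (continuous_const.mul continuous_id).tendsto 0
        simpa using this.mono_left nhdsWithin_le_nhds)
    · filter_upwards [self_mem_nhdsWithin] with m hm
      obtain ⟨pm, em, lm, gm⟩ := key m hm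
      rw [gm]
      exact le_of_lt (div_pos (by nlinarith [hpi]) (by linarith))
    · filter_upwards [self_mem_nhdsWithin] with m hm
      obtain ⟨pm, em, lm, gm⟩ := key m hm
      have hp2m : r_h m * r_c m ≤ 2 * m := by nlinarith [hm.1]
      rw [gm]
      calc 8 * Real.pi * (r_h m * r_c m) / (1 + 3 * (r_h m * r_c m))
          ≤ 8 * Real.pi * (r_h m * r_c m) :=
            div_le_self (by positivity) (by linarith)
        _ ≤ 16 * Real.pi * m := by nlinarith [hpi]
  · -- limit at M
    have hsM : Real.sqrt 3 * M = 1 / 3 := by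
      rw [hM]; field_simp
    have hcont : Filter.Tendsto (fun m : ℝ => 8 * Real.pi * (Real.sqrt 3 * m)
        / (1 + 3 * (Real.sqrt 3 * m))) (nhdsWithin M (Set.Ioo 0 M))
        (nhds (4 * Real.pi / 3)) := by
      have hc : ContinuousAt (fun m : ℝ => 8 * Real.pi * (Real.sqrt 3 * m)
          / (1 + 3 * (Real.sqrt 3 * m))) M := by
        apply ContinuousAt.div (by fun_prop) (by fun_prop)
        rw [hsM]; norm_num
      have hval : 8 * Real.pi * (Real.sqrt 3 * M) / (1 + 3 * (Real.sqrt 3 * M))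
          = 4 * Real.pi / 3 := by rw [hsM]; ring
      simpa [hval] using hc.tendsto.mono_left nhdsWithin_le_nhds
    apply tendsto_of_tendsto_of_tendsto_of_le_of_le' hcont
      (tendsto_const_nhds : Filter.Tendsto (fun _ : ℝ => 4 * Real.pi / 3) _ _)
    · filter_upwards [self_mem_nhdsWithin] with m hm
      obtain ⟨pm, em, lm, gm⟩ := key m hm
      have hm2 : 3 * m ^ 2 ≤ (r_h m * r_c m) ^ 2 := by nlinarith [pm, lm]
      have hsle : Real.sqrt 3 * m ≤ r_h m * r_c m := by
        nlinarith [h3sq, mul_pos h3 hm.1, pm]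
      have d1 : (0:ℝ) < 1 + 3 * (Real.sqrt 3 * m) := by nlinarith [mul_pos h3 hm.1]
      have d2 : (0:ℝ) < 1 + 3 * (r_h m * r_c m) := by nlinarith
      rw [gm, div_le_div_iff₀ d1 d2]
      nlinarith [hpi, mul_nonneg (le_of_lt hpi) (sub_nonneg.mpr hsle),
        mul_pos h3 hm.1]
    · filter_upwards [self_mem_nhdsWithin] with m hm
      obtain ⟨pm, em, lm, gm⟩ := key m hm
      have d2 : (0:ℝ) < 1 + 3 * (r_h m * r_c m) := by nlinarith
      rw [gm, div_le_div_iff₀ d2 (by norm_num : (0:ℝ) < 3)]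
      nlinarith [hpi, mul_pos hpi pm]
end
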